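/- arXiv:math/9910054 — 10 statements merged into one kernel-verified Lean document; each statement's English description precedes it below -/
import Mathlib

section
/- Let k ≥ 1, let n₁,…,n_k be nonempty finite index types and ι their disjoint union (a sigma type). Let L be an ι×ι matrix over ℤ that is block lower triangular (its (i,j) block L_{ij} vanishes whenever i < j), with diagonal blocks L_j := L_{jj}. For each j let H_j be an ι×ι matrix over ℤ that agrees with the identity matrix on every row outside block j, with row-j blocks h_{jl} := (H_j)_{jl} and diagonal block h_j := h_{jj}, and assume each h_j is invertible over ℤ. Then the matrix equation L · H_k · H_{k−1} ⋯ H_1 = Lᵀ holds if and only if the following 'monodromy–Seifert relations' hold: L_j h_j = L_jᵀ for every j; L_i h_{ij} = (L_{ji})ᵀ for every pair i < j; and L_i h_{ij} = −L_{ij} for every pair i > j. -/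
open Matrix

/-- The `(i,j)` block of a matrix indexed by a sigma type. -/
def Matrix.blk {k : ℕ} {n : Fin k → Type} (A : Matrix (Σ j, n j) (Σ j, n j) ℤ)
    (i j : Fin k) : Matrix (n i) (n j) ℤ :=
  fun a b => A ⟨i, a⟩ ⟨j, b⟩

set_option linter.unusedSectionVars false
namespace SeifertAux

variable {k : ℕ} {n : Fin k → Type} [∀ j, Fintype (n j)] [∀ j, DecidableEq (n j)]

lemma entry_lt {L : Matrix (Σ j, n j) (Σ j, n j) ℤ}
    (hL : ∀ i j : Fin k, i < j → L.blk i j = 0) {x y : Σ j, n j}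
    (h : (x.1 : ℕ) < (y.1 : ℕ)) : L x y = 0 := by
  have := congrFun (congrFun (hL x.1 y.1 h) x.2) y.2
  simpa [Matrix.blk] using this

lemma mul_row_special {A B : Matrix (Σ j, n j) (Σ j, n j) ℤ} {j : Fin k}
    (hB : ∀ i : Fin k, i ≠ j → ∀ (a : n i) (y : Σ l, n l),
      B ⟨i, a⟩ y = (1 : Matrix (Σ j, n j) (Σ j, n j) ℤ) ⟨i, a⟩ y)
    (x y : Σ l, n l) :
    (A * B) x y = (∑ c : n j, A x ⟨j, c⟩ * B ⟨j, c⟩ y) + (if y.1 = j then 0 else A x y) := by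
  rw [Matrix.mul_apply, ← Finset.univ_sigma_univ, Finset.sum_sigma,
    ← Finset.add_sum_erase _ _ (Finset.mem_univ j)]
  congr 1
  have key : ∀ l : Fin k, l ≠ j →
      (∑ c : n l, A x ⟨l, c⟩ * B ⟨l, c⟩ y) = if y.1 = l then A x y else 0 := by
    intro l hl
    have h1 : ∀ c : n l, A x ⟨l, c⟩ * B ⟨l, c⟩ y = if y = ⟨l, c⟩ then A x y else 0 := by
      intro c
      rw [hB l hl, Matrix.one_apply]
      by_cases h : y = (⟨l, c⟩ : Σ l, n l)
      · rw [if_pos h, if_pos h.symm, mul_one, h]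
      · rw [if_neg h, if_neg (fun hh => h hh.symm), mul_zero]
    rw [Finset.sum_congr rfl fun c _ => h1 c]
    obtain ⟨m, b⟩ := y
    by_cases hm : m = l
    · subst hm
      simp
    · simp [hm]
  rw [Finset.sum_congr rfl fun l hl => key l (Finset.ne_of_mem_erase hl),
    Finset.sum_ite_eq (Finset.univ.erase j) y.1 (fun _ => A x y)]
  by_cases hy : y.1 = j <;> simp [hy]


def Vp (H : Fin k → Matrix (Σ j, n j) (Σ j, n j) ℤ) : ℕ → Matrix (Σ j, n j) (Σ j, n j) ℤ
  | 0 => 1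
  | (m+1) => Vp H m * (if h : k - m - 1 < k then H ⟨k - m - 1, h⟩ else 1)

lemma Vp_succ (H : Fin k → Matrix (Σ j, n j) (Σ j, n j) ℤ) (m : ℕ) (hm : m < k) :
    Vp H (m+1) = Vp H m * H ⟨k - m - 1, by omega⟩ := by
  rw [Vp, dif_pos (show k - m - 1 < k by omega)]

lemma prod_ofFn_reverse (H : Fin k → Matrix (Σ j, n j) (Σ j, n j) ℤ) :
    (List.ofFn H).reverse.prod = Vp H k := by
  suffices h : ∀ m, m ≤ k → ((List.ofFn H).drop (k - m)).reverse.prod = Vp H m by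
    have := h k le_rfl
    simpa using this
  intro m
  induction m with
  | zero =>
    intro _
    rw [Nat.sub_zero, List.drop_eq_nil_of_le (by simp)]
    simp [Vp]
  | succ m ih =>
    intro hm
    have hmk : m < k := hm
    have hlt : k - m - 1 < (List.ofFn H).length := by simp; omega
    rw [show k - (m+1) = k - m - 1 by omega, List.drop_eq_getElem_cons hlt,
      List.reverse_cons, List.prod_append, List.prod_singleton,
      show k - m - 1 + 1 = k - m by omega, ih (by omega), List.getElem_ofFn,
      Vp_succ H m hmk]


variable {L : Matrix (Σ j, n j) (Σ j, n j) ℤ} {H : Fin k → Matrix (Σ j, n j) (Σ j, n j) ℤ}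

lemma rowC (hL : ∀ i j : Fin k, i < j → L.blk i j = 0)
    (hH : ∀ j i : Fin k, i ≠ j → ∀ (a : n i) (x : Σ l, n l),
      (H j) ⟨i, a⟩ x = (1 : Matrix (Σ j, n j) (Σ j, n j) ℤ) ⟨i, a⟩ x) :
    ∀ m, m ≤ k → ∀ x y : Σ j, n j, (x.1 : ℕ) < k - m → (L * Vp H m) x y = L x y := by
  intro m
  induction m with
  | zero => intro _ x y _; simp [Vp]
  | succ m ih =>
    intro hm x y hx
    have hmk : m < k := hm
    have hx' : (x.1 : ℕ) < k - m - 1 := by omega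
    rw [Vp_succ H m hmk, ← mul_assoc, mul_row_special (hH ⟨k - m - 1, by omega⟩) x y]
    have hterm : ∀ c : n (⟨k - m - 1, by omega⟩ : Fin k),
        (L * Vp H m) x ⟨⟨k - m - 1, by omega⟩, c⟩ = 0 := by
      intro c
      rw [ih (by omega) x _ (by omega)]
      exact entry_lt hL hx'
    rw [Finset.sum_congr rfl fun c _ => by rw [hterm c, zero_mul],
      Finset.sum_const_zero, zero_add]
    by_cases hy : y.1 = (⟨k - m - 1, by omega⟩ : Fin k)
    · rw [if_pos hy]
      refine (entry_lt hL ?_).symm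
      have : (y.1 : ℕ) = k - m - 1 := by rw [hy]
      omega
    · rw [if_neg hy, ih (by omega) x y (by omega)]


lemma fwd (hL : ∀ i j : Fin k, i < j → L.blk i j = 0)
    (hH : ∀ j i : Fin k, i ≠ j → ∀ (a : n i) (x : Σ l, n l),
      (H j) ⟨i, a⟩ x = (1 : Matrix (Σ j, n j) (Σ j, n j) ℤ) ⟨i, a⟩ x)
    (R1 : ∀ j : Fin k, L.blk j j * (H j).blk j j = (L.blk j j)ᵀ)
    (R2 : ∀ i j : Fin k, i < j → L.blk i i * (H i).blk i j = (L.blk j i)ᵀ)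
    (R3 : ∀ i j : Fin k, j < i → L.blk i i * (H i).blk i j = - L.blk i j) :
    ∀ m, m ≤ k → ∀ (i : Fin k) (a : n i) (y : Σ l, n l),
      (L * Vp H m) ⟨i, a⟩ y = if k - m ≤ (i : ℕ) then Lᵀ ⟨i, a⟩ y else L ⟨i, a⟩ y := by
  intro m
  induction m with
  | zero =>
    intro _ i a y
    have hik : (i : ℕ) < k := i.isLt
    simp only [Vp, Nat.sub_zero, mul_one]
    rw [if_neg (by omega)]
  | succ m ih =>
    intro hm i a y
    have hmk : m < k := hm
    rw [Vp_succ H m hmk, ← mul_assoc,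
      mul_row_special (hH ⟨k - m - 1, by omega⟩) ⟨i, a⟩ y]
    set j : Fin k := ⟨k - m - 1, by omega⟩ with hj
    have hjval : (j : ℕ) = k - m - 1 := rfl
    rcases lt_trichotomy ((i : ℕ)) (k - m - 1) with hx | hx | hx
    · -- rows above block j : unchanged
      rw [if_neg (show ¬ (k - (m+1) ≤ (i : ℕ)) by omega)]
      have hterm : ∀ c : n j, (L * Vp H m) ⟨i, a⟩ ⟨j, c⟩ = 0 := by
        intro c
        rw [ih (by omega) i a ⟨j, c⟩, if_neg (by omega)]
        exact entry_lt hL (show (i : ℕ) < (j : ℕ) by omega)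
      rw [Finset.sum_congr rfl fun c _ => by rw [hterm c, zero_mul],
        Finset.sum_const_zero, zero_add]
      by_cases hy : y.1 = j
      · rw [if_pos hy]
        have hyv : ((y.1 : Fin k) : ℕ) = k - m - 1 := by rw [hy]
        have h5 : (i : ℕ) < ((y.1 : Fin k) : ℕ) := by omega
        exact (entry_lt hL h5).symm
      · rw [if_neg hy, ih (by omega) i a y, if_neg (by omega)]
    · -- row block j itself : the relations enter
      have hij : i = j := Fin.ext hx
      subst hij
      rw [if_pos (show k - (m+1) ≤ (j : ℕ) by omega)]
      have hrow : ∀ z : Σ l, n l, (L * Vp H m) ⟨j, a⟩ z = L ⟨j, a⟩ z := by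
        intro z
        rw [ih (by omega) j a z, if_neg (by omega)]
      rw [Finset.sum_congr rfl fun c _ => by rw [hrow ⟨j, c⟩]]
      obtain ⟨l, b⟩ := y
      rcases lt_trichotomy ((l : ℕ)) ((j : ℕ)) with hl | hl | hl
      · -- column l < j : sum cancels the old entry
        have h3 := congrFun (congrFun (R3 j l hl) a) b
        simp only [Matrix.mul_apply, Matrix.blk, Matrix.transpose_apply,
          Matrix.neg_apply] at h3
        rw [if_neg (show ¬ ((⟨l, b⟩ : Σ l, n l).1 = j) from fun hh => by
          have : (l : ℕ) = (j : ℕ) := by rw [show l = j from hh]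
          omega), hrow ⟨l, b⟩, h3, Matrix.transpose_apply]
        rw [entry_lt hL (x := ⟨l, b⟩) (y := ⟨j, a⟩) hl]
        ring
      · -- diagonal block
        have hli : l = j := Fin.ext hl
        subst hli
        rw [if_pos (show ((⟨j, b⟩ : Σ l, n l).1 = j) from rfl), add_zero]
        have h1 := congrFun (congrFun (R1 j) a) b
        simp only [Matrix.mul_apply, Matrix.blk, Matrix.transpose_apply] at h1
        rw [h1, Matrix.transpose_apply]
      · -- column l > j : transposed entry appears
        have h2 := congrFun (congrFun (R2 j l hl) a) b
        simp only [Matrix.mul_apply, Matrix.blk, Matrix.transpose_apply] at h2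
        rw [if_neg (show ¬ ((⟨l, b⟩ : Σ l, n l).1 = j) from fun hh => by
          have : (l : ℕ) = (j : ℕ) := by rw [show l = j from hh]
          omega), hrow ⟨l, b⟩, h2, Matrix.transpose_apply]
        rw [entry_lt hL (x := ⟨j, a⟩) (y := ⟨l, b⟩) hl]
        ring
    · -- rows below block j : already transposed, unchanged
      rw [if_pos (show k - (m+1) ≤ (i : ℕ) by omega)]
      have hterm : ∀ c : n j, (L * Vp H m) ⟨i, a⟩ ⟨j, c⟩ = 0 := by
        intro c
        rw [ih (by omega) i a ⟨j, c⟩, if_pos (by omega), Matrix.transpose_apply]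
        exact entry_lt hL (show (j : ℕ) < (i : ℕ) by omega)
      rw [Finset.sum_congr rfl fun c _ => by rw [hterm c, zero_mul],
        Finset.sum_const_zero, zero_add]
      by_cases hy : y.1 = j
      · rw [if_pos hy, Matrix.transpose_apply]
        have hyv : ((y.1 : Fin k) : ℕ) = k - m - 1 := by rw [hy]
        have h5 : ((y.1 : Fin k) : ℕ) < (i : ℕ) := by omega
        exact (entry_lt hL h5).symm
      · rw [if_neg hy, ih (by omega) i a y, if_pos (by omega)]


lemma Vp_peel (H : Fin k → Matrix (Σ j, n j) (Σ j, n j) ℤ) (m : ℕ) (hm : m < k) :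
    Vp H (k - m) = Vp H (k - m - 1) * H ⟨m, hm⟩ := by
  have e1 : k - m = (k - m - 1) + 1 := by omega
  rw [e1, Vp_succ H (k - m - 1) (by omega)]
  congr 1
  exact congrArg H (Fin.ext (show k - (k - m - 1) - 1 = m by omega))

lemma bwd_rows (hL : ∀ i j : Fin k, i < j → L.blk i j = 0)
    (hH : ∀ j i : Fin k, i ≠ j → ∀ (a : n i) (x : Σ l, n l),
      (H j) ⟨i, a⟩ x = (1 : Matrix (Σ j, n j) (Σ j, n j) ℤ) ⟨i, a⟩ x)
    (hinv : ∀ j : Fin k, IsUnit ((H j).blk j j))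
    (hyp : L * Vp H k = Lᵀ) :
    ∀ m, m ≤ k → ∀ (i : Fin k) (a : n i), m ≤ (i : ℕ) → ∀ y : Σ l, n l,
      (L * Vp H (k - m)) ⟨i, a⟩ y = Lᵀ ⟨i, a⟩ y := by
  intro m
  induction m with
  | zero => intro _ i a _ y; rw [Nat.sub_zero, hyp]
  | succ m ih =>
    intro hm i a hi y
    have hmk : m < k := hm
    set jf : Fin k := ⟨m, hmk⟩ with hjf
    have hjfv : (jf : ℕ) = m := rfl
    have hE : ∀ z : Σ l, n l,
        (∑ c : n jf, (L * Vp H (k - m - 1)) ⟨i, a⟩ ⟨jf, c⟩ * H jf ⟨jf, c⟩ z)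
          + (if z.1 = jf then 0 else (L * Vp H (k - m - 1)) ⟨i, a⟩ z)
          = Lᵀ ⟨i, a⟩ z := by
      intro z
      rw [← mul_row_special (hH jf) ⟨i, a⟩ z]
      have h0 := ih (by omega) i a (by omega) z
      rw [Vp_peel H m hmk, ← mul_assoc] at h0
      exact h0
    set v : n jf → ℤ := fun c => (L * Vp H (k - m - 1)) ⟨i, a⟩ ⟨jf, c⟩ with hvdef
    have hv0 : v = 0 := by
      have hvm : v ᵥ* ((H jf).blk jf jf) = 0 := by
        funext b
        have h1 := hE ⟨jf, b⟩
        rw [if_pos (show ((⟨jf, b⟩ : Σ l, n l).1 = jf) from rfl), add_zero,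
          Matrix.transpose_apply,
          entry_lt hL (x := ⟨jf, b⟩) (y := ⟨i, a⟩) (show (jf : ℕ) < (i : ℕ) by omega)]
          at h1
        simpa [Matrix.vecMul, dotProduct, hvdef, Matrix.blk] using h1
      have hu := (hinv jf).unit.mul_inv
      rw [IsUnit.unit_spec] at hu
      calc v = v ᵥ* (1 : Matrix (n jf) (n jf) ℤ) := (Matrix.vecMul_one v).symm
        _ = v ᵥ* (((H jf).blk jf jf) *
              (((hinv jf).unit⁻¹ : (Matrix (n jf) (n jf) ℤ)ˣ) : Matrix (n jf) (n jf) ℤ)) := by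
            rw [hu]
        _ = (v ᵥ* ((H jf).blk jf jf)) ᵥ*
              (((hinv jf).unit⁻¹ : (Matrix (n jf) (n jf) ℤ)ˣ) : Matrix (n jf) (n jf) ℤ) := by
            rw [Matrix.vecMul_vecMul]
        _ = 0 := by rw [hvm]; exact Matrix.zero_vecMul _
    have hz : ∀ c : n jf, (L * Vp H (k - m - 1)) ⟨i, a⟩ ⟨jf, c⟩ = 0 :=
      fun c => congrFun hv0 c
    have e3 : k - (m + 1) = k - m - 1 := by omega
    rw [e3]
    have h4 := hE y
    by_cases hy : y.1 = jf
    · obtain ⟨l, b⟩ := y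
      have hl : l = jf := hy
      subst hl
      rw [hz b, Matrix.transpose_apply,
        entry_lt hL (x := ⟨jf, b⟩) (y := ⟨i, a⟩) (show (jf : ℕ) < (i : ℕ) by omega)]
    · rw [if_neg hy] at h4
      rw [Finset.sum_congr rfl (fun c _ => by rw [hz c, zero_mul]),
        Finset.sum_const_zero, zero_add] at h4
      exact h4

lemma master (hL : ∀ i j : Fin k, i < j → L.blk i j = 0)
    (hH : ∀ j i : Fin k, i ≠ j → ∀ (a : n i) (x : Σ l, n l),
      (H j) ⟨i, a⟩ x = (1 : Matrix (Σ j, n j) (Σ j, n j) ℤ) ⟨i, a⟩ x)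
    (hinv : ∀ j : Fin k, IsUnit ((H j).blk j j))
    (hyp : L * Vp H k = Lᵀ) (j : Fin k) (a : n j) (y : Σ l, n l) :
    (∑ c : n j, L ⟨j, a⟩ ⟨j, c⟩ * H j ⟨j, c⟩ y) + (if y.1 = j then 0 else L ⟨j, a⟩ y)
      = Lᵀ ⟨j, a⟩ y := by
  have h0 := bwd_rows hL hH hinv hyp (j : ℕ) (le_of_lt j.isLt) j a (le_refl _) y
  rw [Vp_peel H (j : ℕ) j.isLt, ← mul_assoc] at h0
  simp only [Fin.eta] at h0
  rw [mul_row_special (hH j) ⟨j, a⟩ y] at h0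
  have hC : ∀ z : Σ l, n l, (L * Vp H (k - (j : ℕ) - 1)) ⟨j, a⟩ z = L ⟨j, a⟩ z := by
    intro z
    have hjk : (j : ℕ) < k := j.isLt
    have hlt : ((j : ℕ)) < k - (k - (j : ℕ) - 1) := by omega
    exact rowC hL hH (k - (j : ℕ) - 1) (by omega) ⟨j, a⟩ z hlt
  rw [Finset.sum_congr rfl fun c _ => by rw [hC ⟨j, c⟩]] at h0
  by_cases hy : y.1 = j
  · rw [if_pos hy] at h0 ⊢
    exact h0
  · rw [if_neg hy, hC y] at h0
    rw [if_neg hy]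
    exact h0

end SeifertAux

/-- The monodromy–Seifert relations: `L · H_k ⋯ H_1 = Lᵀ` iff the blockwise relations hold. -/
theorem seifert_monodromy_relations {k : ℕ} (hk : 1 ≤ k) (n : Fin k → Type)
    [∀ j, Fintype (n j)] [∀ j, DecidableEq (n j)] [∀ j, Nonempty (n j)]
    (L : Matrix (Σ j, n j) (Σ j, n j) ℤ)
    (hL : ∀ i j : Fin k, i < j → L.blk i j = 0)
    (H : Fin k → Matrix (Σ j, n j) (Σ j, n j) ℤ)
    (hH : ∀ j i : Fin k, i ≠ j → ∀ (a : n i) (x : Σ l, n l),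
      (H j) ⟨i, a⟩ x = (1 : Matrix (Σ j, n j) (Σ j, n j) ℤ) ⟨i, a⟩ x)
    (hinv : ∀ j : Fin k, IsUnit ((H j).blk j j)) :
    L * (List.ofFn H).reverse.prod = Lᵀ ↔
      ((∀ j : Fin k, L.blk j j * (H j).blk j j = (L.blk j j)ᵀ) ∧
       (∀ i j : Fin k, i < j → L.blk i i * (H i).blk i j = (L.blk j i)ᵀ) ∧
       (∀ i j : Fin k, j < i → L.blk i i * (H i).blk i j = - L.blk i j)) := by
  rw [SeifertAux.prod_ofFn_reverse H]
  constructor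
  · intro hyp
    refine ⟨?_, ?_, ?_⟩
    · -- diagonal relation
      intro j
      ext a b
      have h := SeifertAux.master hL hH hinv hyp j a ⟨j, b⟩
      rw [if_pos (show ((⟨j, b⟩ : Σ l, n l).1 = j) from rfl), add_zero,
        Matrix.transpose_apply] at h
      simp only [Matrix.mul_apply, Matrix.blk, Matrix.transpose_apply]
      exact h
    · -- below-diagonal column relations (i < j)
      intro i j hij
      have hijv : (i : ℕ) < (j : ℕ) := hij
      ext a b
      have h := SeifertAux.master hL hH hinv hyp i a ⟨j, b⟩
      rw [if_neg (show ¬ ((⟨j, b⟩ : Σ l, n l).1 = i) from fun hh => by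
          have : (j : ℕ) = (i : ℕ) := congrArg Fin.val hh
          omega),
        SeifertAux.entry_lt hL (x := ⟨i, a⟩) (y := ⟨j, b⟩) hijv, add_zero,
        Matrix.transpose_apply] at h
      simp only [Matrix.mul_apply, Matrix.blk, Matrix.transpose_apply]
      exact h
    · -- above-diagonal column relations (j < i)
      intro i j hji
      have hjiv : (j : ℕ) < (i : ℕ) := hji
      ext a b
      have h := SeifertAux.master hL hH hinv hyp i a ⟨j, b⟩
      rw [if_neg (show ¬ ((⟨j, b⟩ : Σ l, n l).1 = i) from fun hh => by
          have : (j : ℕ) = (i : ℕ) := congrArg Fin.val hh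
          omega),
        Matrix.transpose_apply,
        SeifertAux.entry_lt hL (x := ⟨j, b⟩) (y := ⟨i, a⟩) hjiv] at h
      simp only [Matrix.mul_apply, Matrix.blk, Matrix.neg_apply]
      exact eq_neg_of_add_eq_zero_left h
  · rintro ⟨R1, R2, R3⟩
    ext x y
    obtain ⟨i, a⟩ := x
    have h := SeifertAux.fwd hL hH R1 R2 R3 k le_rfl i a y
    rw [Nat.sub_self] at h
    rw [if_pos (Nat.zero_le _)] at h
    exact h
end

section
/- Let k ≥ 1, let n₁,…,n_k be nonempty finite index types and ι their disjoint union (a sigma type). Let L be an ι×ι matrix over ℤ that is block lower triangular (its (i,j) block L_{ij} vanishes whenever i < j), with diagonal blocks L_j := L_{jj}. For each j let H_j be an ι×ι matrix over ℤ that agrees with the identity matrix on every row outside block j, with row-j blocks h_{jl} := (H_j)_{jl} and diagonal block h_j := h_{jj}, and assume each h_j is invertible over ℤ. If the monodromy–Seifert relations hold (L_j h_j = L_jᵀ for every j; L_i h_{ij} = (L_{ji})ᵀ for i < j; L_i h_{ij} = −L_{ij} for i > j), then, setting S := L − Lᵀ, one has H_jᵀ · S · H_j = S for every j; that is, each local monodromy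 matrix preserves the intersection form S = L − Lᵀ. -/
open Matrix

section Aux

set_option linter.unusedSectionVars false

variable {k : ℕ} {n : Fin k → Type} [∀ j, Fintype (n j)] [∀ j, DecidableEq (n j)]

lemma blk_ext {A B : Matrix (Σ j, n j) (Σ j, n j) ℤ}
    (h : ∀ p q, A.blk p q = B.blk p q) : A = B := by
  ext ⟨p, a⟩ ⟨q, b⟩
  exact congrFun (congrFun (h p q) a) b

lemma blk_sub (A B : Matrix (Σ j, n j) (Σ j, n j) ℤ) (p q : Fin k) :
    (A - B).blk p q = A.blk p q - B.blk p q := rfl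

lemma blk_add (A B : Matrix (Σ j, n j) (Σ j, n j) ℤ) (p q : Fin k) :
    (A + B).blk p q = A.blk p q + B.blk p q := rfl

lemma blk_transpose (A : Matrix (Σ j, n j) (Σ j, n j) ℤ) (p q : Fin k) :
    (Aᵀ).blk p q = (A.blk q p)ᵀ := rfl

lemma blk_zero (p q : Fin k) : (0 : Matrix (Σ j, n j) (Σ j, n j) ℤ).blk p q = 0 := rfl

lemma blk_one_ne {p q : Fin k} (h : q ≠ p) :
    (1 : Matrix (Σ j, n j) (Σ j, n j) ℤ).blk p q = 0 := by
  ext a b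
  simp only [Matrix.blk, Matrix.one_apply, Matrix.zero_apply, ite_eq_right_iff]
  intro hx
  exact absurd (congrArg Sigma.fst hx).symm h

lemma blk_one_self (p : Fin k) :
    (1 : Matrix (Σ j, n j) (Σ j, n j) ℤ).blk p p = 1 := by
  ext a b
  simp only [Matrix.blk, Matrix.one_apply, Sigma.mk.inj_iff, heq_eq_eq, true_and]

/-- Multiplication on the right by a matrix supported on row-block `j`. -/
lemma mul_rowblk (A E : Matrix (Σ j, n j) (Σ j, n j) ℤ) (j : Fin k)
    (hE : ∀ i, i ≠ j → ∀ (a : n i) (x : Σ l, n l), E ⟨i, a⟩ x = 0) (p q : Fin k) :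
    (A * E).blk p q = A.blk p j * E.blk j q := by
  ext a b
  show ∑ x : Σ l, n l, A ⟨p, a⟩ x * E x ⟨q, b⟩ = ∑ c, A ⟨p, a⟩ ⟨j, c⟩ * E ⟨j, c⟩ ⟨q, b⟩
  rw [← Finset.univ_sigma_univ, Finset.sum_sigma]
  refine Finset.sum_eq_single j (fun i _ hij => ?_) (by simp)
  simp [hE i hij]

/-- Multiplication on the left by the transpose of a matrix supported on row-block `j`. -/
lemma rowblk_mul (E A : Matrix (Σ j, n j) (Σ j, n j) ℤ) (j : Fin k)
    (hE : ∀ i, i ≠ j → ∀ (a : n i) (x : Σ l, n l), E ⟨i, a⟩ x = 0) (p q : Fin k) :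
    (Eᵀ * A).blk p q = (E.blk j p)ᵀ * A.blk j q := by
  ext a b
  show ∑ x : Σ l, n l, E x ⟨p, a⟩ * A x ⟨q, b⟩ = ∑ c, E ⟨j, c⟩ ⟨p, a⟩ * A ⟨j, c⟩ ⟨q, b⟩
  rw [← Finset.univ_sigma_univ, Finset.sum_sigma]
  refine Finset.sum_eq_single j (fun i _ hij => ?_) (by simp)
  simp [hE i hij]

end Aux

/-- If the monodromy–Seifert relations hold, then each local monodromy matrix `H_j`
preserves the intersection form `S = L − Lᵀ`. -/
theorem local_monodromy_preserves_intersection_form {k : ℕ} (hk : 1 ≤ k) (n : Fin k → Type)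
    [∀ j, Fintype (n j)] [∀ j, DecidableEq (n j)] [∀ j, Nonempty (n j)]
    (L : Matrix (Σ j, n j) (Σ j, n j) ℤ)
    (hL : ∀ i j : Fin k, i < j → L.blk i j = 0)
    (H : Fin k → Matrix (Σ j, n j) (Σ j, n j) ℤ)
    (hH : ∀ j i : Fin k, i ≠ j → ∀ (a : n i) (x : Σ l, n l),
      (H j) ⟨i, a⟩ x = (1 : Matrix (Σ j, n j) (Σ j, n j) ℤ) ⟨i, a⟩ x)
    (hinv : ∀ j : Fin k, IsUnit ((H j).blk j j))
    (hdiag : ∀ j : Fin k, L.blk j j * (H j).blk j j = (L.blk j j)ᵀ)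
    (hlt : ∀ i j : Fin k, i < j → L.blk i i * (H i).blk i j = (L.blk j i)ᵀ)
    (hgt : ∀ i j : Fin k, j < i → L.blk i i * (H i).blk i j = - L.blk i j) :
    ∀ j : Fin k, (H j)ᵀ * (L - Lᵀ) * (H j) = L - Lᵀ := by
  intro j
  set S : Matrix (Σ j, n j) (Σ j, n j) ℤ := L - Lᵀ with hSdef
  set E : Matrix (Σ j, n j) (Σ j, n j) ℤ := H j - 1 with hEdef
  have hE0 : ∀ i, i ≠ j → ∀ (a : n i) (x : Σ l, n l), E ⟨i, a⟩ x = 0 := by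
    intro i hi a x
    simp [hEdef, Matrix.sub_apply, hH j i hi a x]
  have hHj : H j = 1 + E := by rw [hEdef]; abel
  -- blocks of E
  have hEblk : ∀ q, E.blk j q = (H j).blk j q - (1 : Matrix (Σ j, n j) (Σ j, n j) ℤ).blk j q :=
    fun q => rfl
  -- key fact: L_j * E_{jq} = -(S.blk j q)
  have fA : ∀ q, L.blk j j * E.blk j q = -(S.blk j q) := by
    intro q
    have hSblk : S.blk j q = L.blk j q - (L.blk q j)ᵀ := rfl
    rcases lt_trichotomy q j with h | h | h
    · rw [hEblk, blk_one_ne (ne_of_lt h), sub_zero, hgt j q h, hSblk,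
        hL q j h, transpose_zero, sub_zero]
    · subst h
      rw [hEblk, blk_one_self, mul_sub, mul_one, hdiag q, hSblk, neg_sub]
    · rw [hEblk, blk_one_ne (ne_of_gt h), sub_zero, hlt j q h, hSblk, hL j q h,
        zero_sub, neg_neg]
  -- transposed fact: E_{jp}ᵀ * L_jᵀ = S.blk p j
  have fB : ∀ p, (E.blk j p)ᵀ * (L.blk j j)ᵀ = S.blk p j := by
    intro p
    have := congrArg Matrix.transpose (fA p)
    rw [transpose_mul, transpose_neg] at this
    rw [this]
    have h1 : (S.blk j p)ᵀ = -(S.blk p j) := by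
      show ((L - Lᵀ).blk j p)ᵀ = -((L - Lᵀ).blk p j)
      rw [blk_sub, blk_sub, blk_transpose, blk_transpose, transpose_sub,
        transpose_transpose, neg_sub]
    rw [h1, neg_neg]
  -- the key vanishing identity
  have key : Eᵀ * S + S * E + Eᵀ * (S * E) = 0 := by
    apply blk_ext
    intro p q
    rw [blk_add, blk_add, blk_zero, rowblk_mul E S j hE0, mul_rowblk S E j hE0,
      rowblk_mul E (S * E) j hE0, mul_rowblk S E j hE0]
    have hSjj : S.blk j j = L.blk j j - (L.blk j j)ᵀ := rfl
    have hSjq : (E.blk j p)ᵀ * (S.blk j j * E.blk j q)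
        = -((E.blk j p)ᵀ * S.blk j q) - S.blk p j * E.blk j q := by
      rw [hSjj, Matrix.sub_mul, Matrix.mul_sub, fA q, ← Matrix.mul_assoc, fB p, Matrix.mul_neg]
    rw [hSjq]
    abel
  calc (H j)ᵀ * S * H j
      = S + (Eᵀ * S + S * E + Eᵀ * (S * E)) := by
        rw [hHj, transpose_add, transpose_one]
        noncomm_ring
    _ = S := by rw [key, add_zero]
end

section
/- For all integers p, q, c, the characteristic polynomial of the product matrix H₂(p,q) · H₁(p,q,c) equals (X+1)·(X³ + 2(p²−pq+q²−1)·(X²−X) − 1), equivalently X⁴ + (2(p²−pq+q²−1)+1)·X³ − (2(p²−pq+q²−1)+1)·X − 1, in ℤ[X]. In particular the characteristic polynomial is independent of c. -/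
open Polynomial Matrix

set_option maxHeartbeats 4000000 in
/-- The characteristic polynomial of the product `H₂(p,q) · H₁(p,q,c)` of the candidate
local monodromy matrices of the Briançon polynomial equals
`(X+1)(X³ + 2(p²−pq+q²−1)(X²−X) − 1)`; in particular it is independent of `c`. -/
theorem briancon_charpoly_product (p q c : ℤ) :
    ((!![1, 0, 0, 0;
         0, 1, 0, 0;
         0, 0, 1, 0;
         p, q, 0, 1] : Matrix (Fin 4) (Fin 4) ℤ) *
     (!![0, -1, 0, -2*p + 2*q;
         1, 1, 0, -2*q;
         0, -1, -1, c;
         0, 0, 0, 1] : Matrix (Fin 4) (Fin 4) ℤ)).charpoly =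
      (X + 1) * (X ^ 3 + C (2 * (p ^ 2 - p * q + q ^ 2 - 1)) * (X ^ 2 - X) - 1) ∧
    ((!![1, 0, 0, 0;
         0, 1, 0, 0;
         0, 0, 1, 0;
         p, q, 0, 1] : Matrix (Fin 4) (Fin 4) ℤ) *
     (!![0, -1, 0, -2*p + 2*q;
         1, 1, 0, -2*q;
         0, -1, -1, c;
         0, 0, 0, 1] : Matrix (Fin 4) (Fin 4) ℤ)).charpoly =
      X ^ 4 + C (2 * (p ^ 2 - p * q + q ^ 2 - 1) + 1) * X ^ 3
        - C (2 * (p ^ 2 - p * q + q ^ 2 - 1) + 1) * X - 1 := by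
  have hM : ((!![1, 0, 0, 0;
         0, 1, 0, 0;
         0, 0, 1, 0;
         p, q, 0, 1] : Matrix (Fin 4) (Fin 4) ℤ) *
     (!![0, -1, 0, -2*p + 2*q;
         1, 1, 0, -2*q;
         0, -1, -1, c;
         0, 0, 0, 1] : Matrix (Fin 4) (Fin 4) ℤ)) =
      !![0, -1, 0, -2*p + 2*q;
         1, 1, 0, -2*q;
         0, -1, -1, c;
         q, -p + q, 0, p*(-2*p + 2*q) + q*(-2*q) + 1] := by
    ext i j
    fin_cases i <;> fin_cases j <;>
      simp [Matrix.mul_apply, Fin.sum_univ_four, Matrix.vecHead, Matrix.vecTail] <;> ring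
  have key : ((!![1, 0, 0, 0;
         0, 1, 0, 0;
         0, 0, 1, 0;
         p, q, 0, 1] : Matrix (Fin 4) (Fin 4) ℤ) *
     (!![0, -1, 0, -2*p + 2*q;
         1, 1, 0, -2*q;
         0, -1, -1, c;
         0, 0, 0, 1] : Matrix (Fin 4) (Fin 4) ℤ)).charpoly =
      X ^ 4 + C (2 * (p ^ 2 - p * q + q ^ 2 - 1) + 1) * X ^ 3
        - C (2 * (p ^ 2 - p * q + q ^ 2 - 1) + 1) * X - 1 := by
    have hcm : charmatrix (!![0, -1, 0, -2*p + 2*q;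
         1, 1, 0, -2*q;
         0, -1, -1, c;
         q, -p + q, 0, p*(-2*p + 2*q) + q*(-2*q) + 1] : Matrix (Fin 4) (Fin 4) ℤ) =
      !![X, C 1, 0, C (2*p - 2*q);
         C (-1), X - 1, 0, C (2*q);
         0, C 1, X + 1, C (-c);
         C (-q), C (p - q), 0, X - C (p*(-2*p + 2*q) + q*(-2*q) + 1)] := by
      ext i j
      fin_cases i <;> fin_cases j <;>
        simp [charmatrix_apply, Matrix.diagonal, Matrix.vecHead, Matrix.vecTail] <;> ring
    rw [hM, Matrix.charpoly, hcm, Matrix.det_succ_row_zero]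
    simp [Fin.sum_univ_succ, Matrix.det_fin_three, Fin.succAbove,
      Matrix.vecHead, Matrix.vecTail, Fin.castSucc, Fin.castAdd, Fin.castLE, Polynomial.C_1]
    ring
  refine ⟨?_, key⟩
  rw [key]
  simp only [map_add, _root_.map_mul, map_sub, map_ofNat, Polynomial.C_1, map_pow]
  ring
end

section
/- For all integers p, q, c, the characteristic polynomial of H₂(p,q) · H₁(p,q,c) equals X⁴ + X³ − X − 1 (which factors as (X+1)(X³−1)) if and only if p² − pq + q² = 1. -/
open Polynomial Matrix

set_option maxHeartbeats 1000000 in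
private lemma det_fin_four' {R : Type*} [CommRing R] (A : Matrix (Fin 4) (Fin 4) R) :
    A.det = A 0 0 * (A 1 1 * (A 2 2 * A 3 3 - A 2 3 * A 3 2) - A 1 2 * (A 2 1 * A 3 3 - A 2 3 * A 3 1) + A 1 3 * (A 2 1 * A 3 2 - A 2 2 * A 3 1))
      - A 0 1 * (A 1 0 * (A 2 2 * A 3 3 - A 2 3 * A 3 2) - A 1 2 * (A 2 0 * A 3 3 - A 2 3 * A 3 0) + A 1 3 * (A 2 0 * A 3 2 - A 2 2 * A 3 0))
      + A 0 2 * (A 1 0 * (A 2 1 * A 3 3 - A 2 3 * A 3 1) - A 1 1 * (A 2 0 * A 3 3 - A 2 3 * A 3 0) + A 1 3 * (A 2 0 * A 3 1 - A 2 1 * A 3 0))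
      - A 0 3 * (A 1 0 * (A 2 1 * A 3 2 - A 2 2 * A 3 1) - A 1 1 * (A 2 0 * A 3 2 - A 2 2 * A 3 0) + A 1 2 * (A 2 0 * A 3 1 - A 2 1 * A 3 0)) := by
  rw [Matrix.det_succ_row_zero, Fin.sum_univ_four]
  simp [Matrix.det_fin_three, Matrix.submatrix_apply,
    show (Fin.succAbove 1 2 : Fin 4) = 3 from rfl,
    show (Fin.succAbove 2 1 : Fin 4) = 1 from rfl,
    show (Fin.succAbove 2 2 : Fin 4) = 3 from rfl,
    show (Fin.succAbove 3 1 : Fin 4) = 1 from rfl,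
    show (Fin.succAbove 3 2 : Fin 4) = 2 from rfl,
    show (Fin.succ 2 : Fin 4) = 3 from rfl, show (((3:Fin 4)):ℕ) = 3 from rfl]
  ring

set_option maxHeartbeats 2000000 in
private lemma briancon_charpoly_key (p q c : ℤ) :
    ((!![1, 0, 0, 0;
         0, 1, 0, 0;
         0, 0, 1, 0;
         p, q, 0, 1] : Matrix (Fin 4) (Fin 4) ℤ) *
     (!![0, -1, 0, -2*p + 2*q;
         1, 1, 0, -2*q;
         0, -1, -1, c;
         0, 0, 0, 1] : Matrix (Fin 4) (Fin 4) ℤ)).charpoly =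
      X ^ 4 + X ^ 3 - X - 1 + C (2*(p^2 - p*q + q^2 - 1)) * (X^3 - X) := by
  have hM : (!![1, 0, 0, 0; 0, 1, 0, 0; 0, 0, 1, 0; p, q, 0, 1] *
      !![0, -1, 0, -2*p + 2*q; 1, 1, 0, -2*q; 0, -1, -1, c; 0, 0, 0, 1] : Matrix (Fin 4) (Fin 4) ℤ) =
      !![0, -1, 0, -2*p+2*q;
         1, 1, 0, -2*q;
         0, -1, -1, c;
         q, -p+q, 0, -2*p^2+2*p*q-2*q^2+1] := by
    ext i j
    fin_cases i <;> fin_cases j <;>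
      simp [Matrix.mul_apply, Fin.sum_univ_four, Matrix.vecHead, Matrix.vecTail] <;> ring
  rw [hM, Matrix.charpoly, det_fin_four']
  simp [charmatrix_apply, Matrix.diagonal_apply, Matrix.vecHead, Matrix.vecTail]
  ring

/-- The characteristic polynomial of `H₂(p,q) · H₁(p,q,c)` equals
`X⁴ + X³ − X − 1 = (X+1)(X³−1)` if and only if `p² − pq + q² = 1`. -/
theorem briancon_charpoly_iff (p q c : ℤ) :
    ((!![1, 0, 0, 0;
         0, 1, 0, 0;
         0, 0, 1, 0;
         p, q, 0, 1] : Matrix (Fin 4) (Fin 4) ℤ) *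
     (!![0, -1, 0, -2*p + 2*q;
         1, 1, 0, -2*q;
         0, -1, -1, c;
         0, 0, 0, 1] : Matrix (Fin 4) (Fin 4) ℤ)).charpoly =
      X ^ 4 + X ^ 3 - X - 1 ↔ p ^ 2 - p * q + q ^ 2 = 1 := by
  rw [briancon_charpoly_key p q c]
  constructor
  · intro h
    have h3 : (C (2*(p^2 - p*q + q^2 - 1)) : ℤ[X]) * (X^3 - X) = 0 := by
      linear_combination h
    have hx : (X^3 - X : ℤ[X]) ≠ 0 := by
      intro hx
      have := congrArg (Polynomial.eval 2) hx
      norm_num at this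
    rcases mul_eq_zero.mp h3 with h4 | h4
    · have := (map_eq_zero_iff C C_injective).mp h4
      omega
    · exact absurd h4 hx
  · intro h
    have : p^2 - p*q + q^2 - 1 = 0 := by omega
    simp [this]
end

section
/- Let H₂ be the 4×4 integer matrix with rows (1,0,0,0), (0,1,0,0), (0,0,1,0), (1,0,0,1), and for an integer c let H₁(c) be the 4×4 integer matrix with rows (0,−1,0,−2), (1,1,0,0), (0,−1,−1,c), (0,0,0,1). Then for every integer c, the product M := H₂ · H₁(c) has characteristic polynomial (X+1)(X³−1) = X⁴ + X³ − X − 1, satisfies M⁶ = 1, and M^k ≠ 1 for every k with 1 ≤ k ≤ 5 (so M has order exactly 6 in GL₄(ℤ)). -/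
open Polynomial Matrix

set_option maxHeartbeats 1600000

/-- The homological monodromy at infinity `M = H₂ · H₁(c)` of the Briançon polynomial
has characteristic polynomial `(X+1)(X³−1) = X⁴ + X³ − X − 1` and order exactly `6`
in `GL₄(ℤ)`. -/
theorem briancon_monodromy_at_infinity_order_six (c : ℤ) :
    ∀ M : Matrix (Fin 4) (Fin 4) ℤ,
      M = (!![1, 0, 0, 0;
              0, 1, 0, 0;
              0, 0, 1, 0;
              1, 0, 0, 1] : Matrix (Fin 4) (Fin 4) ℤ) *
          (!![0, -1, 0, -2;
              1, 1, 0, 0;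
              0, -1, -1, c;
              0, 0, 0, 1] : Matrix (Fin 4) (Fin 4) ℤ) →
      M.charpoly = (X + 1) * (X ^ 3 - 1) ∧
      M.charpoly = X ^ 4 + X ^ 3 - X - 1 ∧
      M ^ 6 = 1 ∧
      ∀ k : ℕ, 1 ≤ k → k ≤ 5 → M ^ k ≠ 1 := by
  intro M hM
  have hM' : M = !![0, -1, 0, -2; 1, 1, 0, 0; 0, -1, -1, c; 0, -1, 0, -1] := by
    rw [hM]; ext i j; fin_cases i <;> fin_cases j <;>
      simp [Matrix.mul_apply, Fin.sum_univ_four, Matrix.vecHead, Matrix.vecTail]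
  subst hM'
  clear hM
  have hcp : (!![0, -1, 0, -2; 1, 1, 0, 0; 0, -1, -1, c; 0, -1, 0, -1] :
      Matrix (Fin 4) (Fin 4) ℤ).charpoly = X ^ 4 + X ^ 3 - X - 1 := by
    rw [Matrix.charpoly]
    have hcm : charmatrix (!![0, -1, 0, -2; 1, 1, 0, 0; 0, -1, -1, c; 0, -1, 0, -1] :
        Matrix (Fin 4) (Fin 4) ℤ)
        = !![X, 1, 0, 2; -1, X - 1, 0, 0; 0, 1, X + 1, -C c; 0, 1, 0, X + 1] := by
      ext i j
      fin_cases i <;> fin_cases j <;>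
        simp [charmatrix_apply_eq, charmatrix_apply_ne, Matrix.vecHead, Matrix.vecTail]
    rw [hcm]
    simp [Matrix.det_succ_row_zero, Fin.sum_univ_succ, Matrix.det_fin_three,
      Fin.succAbove, Fin.castSucc, Fin.castAdd, Fin.castLE,
      Matrix.vecHead, Matrix.vecTail]
    ring
  have h2 : (!![0, -1, 0, -2; 1, 1, 0, 0; 0, -1, -1, c; 0, -1, 0, -1] :
      Matrix (Fin 4) (Fin 4) ℤ) ^ 2
      = !![-1, 1, 0, 2; 1, 0, 0, -2; -1, -c, 1, -2*c; -1, 0, 0, 1] := by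
    rw [sq]
    ext i j; fin_cases i <;> fin_cases j <;>
      simp [Matrix.mul_apply, Fin.sum_univ_four, Matrix.vecHead, Matrix.vecTail] <;> ring
  have h3 : (!![0, -1, 0, -2; 1, 1, 0, 0; 0, -1, -1, c; 0, -1, 0, -1] :
      Matrix (Fin 4) (Fin 4) ℤ) ^ 3
      = !![1, 0, 0, 0; 0, 1, 0, 0; -c, c, -1, 2+3*c; 0, 0, 0, 1] := by
    rw [pow_succ, h2]
    ext i j; fin_cases i <;> fin_cases j <;>
      simp [Matrix.mul_apply, Fin.sum_univ_four, Matrix.vecHead, Matrix.vecTail] <;> ring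
  have h6 : (!![0, -1, 0, -2; 1, 1, 0, 0; 0, -1, -1, c; 0, -1, 0, -1] :
      Matrix (Fin 4) (Fin 4) ℤ) ^ 6 = 1 := by
    have e6 : (!![0, -1, 0, -2; 1, 1, 0, 0; 0, -1, -1, c; 0, -1, 0, -1] :
        Matrix (Fin 4) (Fin 4) ℤ) ^ 6
        = (!![0, -1, 0, -2; 1, 1, 0, 0; 0, -1, -1, c; 0, -1, 0, -1] ^ 3) ^ 2 :=
      pow_mul _ 3 2
    rw [e6, h3, sq]
    ext i j; fin_cases i <;> fin_cases j <;>
      simp [Matrix.mul_apply, Fin.sum_univ_four, Matrix.vecHead, Matrix.vecTail,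
        Matrix.one_apply] <;> ring
  refine ⟨by rw [hcp]; ring, hcp, h6, ?_⟩
  have h4 : ((!![0, -1, 0, -2; 1, 1, 0, 0; 0, -1, -1, c; 0, -1, 0, -1] :
      Matrix (Fin 4) (Fin 4) ℤ) ^ 4) 0 0 = 0 := by
    have e4 : (!![0, -1, 0, -2; 1, 1, 0, 0; 0, -1, -1, c; 0, -1, 0, -1] :
        Matrix (Fin 4) (Fin 4) ℤ) ^ 4
        = !![0, -1, 0, -2; 1, 1, 0, 0; 0, -1, -1, c; 0, -1, 0, -1] ^ 3 *
          !![0, -1, 0, -2; 1, 1, 0, 0; 0, -1, -1, c; 0, -1, 0, -1] :=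
      pow_succ _ 3
    rw [e4, h3]
    simp [Matrix.mul_apply, Fin.sum_univ_four, Matrix.vecHead, Matrix.vecTail]
  have h5 : ((!![0, -1, 0, -2; 1, 1, 0, 0; 0, -1, -1, c; 0, -1, 0, -1] :
      Matrix (Fin 4) (Fin 4) ℤ) ^ 5) 0 0 = -1 := by
    have e5 : (!![0, -1, 0, -2; 1, 1, 0, 0; 0, -1, -1, c; 0, -1, 0, -1] :
        Matrix (Fin 4) (Fin 4) ℤ) ^ 5
        = !![0, -1, 0, -2; 1, 1, 0, 0; 0, -1, -1, c; 0, -1, 0, -1] ^ 3 *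
          !![0, -1, 0, -2; 1, 1, 0, 0; 0, -1, -1, c; 0, -1, 0, -1] ^ 2 :=
      pow_add _ 3 2
    rw [e5, h3, h2]
    simp [Matrix.mul_apply, Fin.sum_univ_four, Matrix.vecHead, Matrix.vecTail]
  intro k hk1 hk5
  interval_cases k
  · intro h
    have := congrFun (congrFun h 0) 0
    simp [Matrix.one_apply, Matrix.vecHead, Matrix.vecTail] at this
  · intro h
    rw [h2] at h
    have := congrFun (congrFun h 0) 0
    simp [Matrix.one_apply, Matrix.vecHead, Matrix.vecTail] at this
  · intro h
    rw [h3] at h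
    have := congrFun (congrFun h 2) 2
    simp [Matrix.one_apply, Matrix.vecHead, Matrix.vecTail] at this
  · intro h
    rw [h] at h4
    simp [Matrix.one_apply] at h4
  · intro h
    rw [h] at h5
    simp [Matrix.one_apply] at h5
end

section
/- For all integers p, q, c, the 4×4 integer matrix H₁(p,q,c) with rows (0,−1,0,−2p+2q), (1,1,0,−2q), (0,−1,−1,c), (0,0,0,1) satisfies H₁(p,q,c)⁶ = 1 and H₁(p,q,c)^k ≠ 1 for every k with 1 ≤ k ≤ 5; that is, it has order exactly 6 in GL₄(ℤ). -/
open Matrix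

private theorem mul_fin_four {α} [NonUnitalNonAssocSemiring α]
    (a₁₁ a₁₂ a₁₃ a₁₄ a₂₁ a₂₂ a₂₃ a₂₄ a₃₁ a₃₂ a₃₃ a₃₄ a₄₁ a₄₂ a₄₃ a₄₄
     b₁₁ b₁₂ b₁₃ b₁₄ b₂₁ b₂₂ b₂₃ b₂₄ b₃₁ b₃₂ b₃₃ b₃₄ b₄₁ b₄₂ b₄₃ b₄₄ : α) :
    !![a₁₁, a₁₂, a₁₃, a₁₄; a₂₁, a₂₂, a₂₃, a₂₄; a₃₁, a₃₂, a₃₃, a₃₄; a₄₁, a₄₂, a₄₃, a₄₄] *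
      !![b₁₁, b₁₂, b₁₃, b₁₄; b₂₁, b₂₂, b₂₃, b₂₄; b₃₁, b₃₂, b₃₃, b₃₄; b₄₁, b₄₂, b₄₃, b₄₄] =
    !![a₁₁*b₁₁ + a₁₂*b₂₁ + a₁₃*b₃₁ + a₁₄*b₄₁, a₁₁*b₁₂ + a₁₂*b₂₂ + a₁₃*b₃₂ + a₁₄*b₄₂,
       a₁₁*b₁₃ + a₁₂*b₂₃ + a₁₃*b₃₃ + a₁₄*b₄₃, a₁₁*b₁₄ + a₁₂*b₂₄ + a₁₃*b₃₄ + a₁₄*b₄₄;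
       a₂₁*b₁₁ + a₂₂*b₂₁ + a₂₃*b₃₁ + a₂₄*b₄₁, a₂₁*b₁₂ + a₂₂*b₂₂ + a₂₃*b₃₂ + a₂₄*b₄₂,
       a₂₁*b₁₃ + a₂₂*b₂₃ + a₂₃*b₃₃ + a₂₄*b₄₃, a₂₁*b₁₄ + a₂₂*b₂₄ + a₂₃*b₃₄ + a₂₄*b₄₄;
       a₃₁*b₁₁ + a₃₂*b₂₁ + a₃₃*b₃₁ + a₃₄*b₄₁, a₃₁*b₁₂ + a₃₂*b₂₂ + a₃₃*b₃₂ + a₃₄*b₄₂,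
       a₃₁*b₁₃ + a₃₂*b₂₃ + a₃₃*b₃₃ + a₃₄*b₄₃, a₃₁*b₁₄ + a₃₂*b₂₄ + a₃₃*b₃₄ + a₃₄*b₄₄;
       a₄₁*b₁₁ + a₄₂*b₂₁ + a₄₃*b₃₁ + a₄₄*b₄₁, a₄₁*b₁₂ + a₄₂*b₂₂ + a₄₃*b₃₂ + a₄₄*b₄₂,
       a₄₁*b₁₃ + a₄₂*b₂₃ + a₄₃*b₃₃ + a₄₄*b₄₃, a₄₁*b₁₄ + a₄₂*b₂₄ + a₄₃*b₃₄ + a₄₄*b₄₄] := by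
  ext i j
  fin_cases i <;> fin_cases j <;>
    simp [Matrix.mul_apply, Fin.sum_univ_four]

private theorem one_fin_four {α} [Zero α] [One α] :
    (1 : Matrix (Fin 4) (Fin 4) α) = !![1, 0, 0, 0; 0, 1, 0, 0; 0, 0, 1, 0; 0, 0, 0, 1] := by
  ext i j
  fin_cases i <;> fin_cases j <;> simp [Matrix.one_apply, vecHead, vecTail]

/-- For all integers `p, q, c`, the candidate local monodromy matrix `H₁(p,q,c)` of the
Briançon polynomial has order exactly `6` in `GL₄(ℤ)`. -/
theorem briancon_local_monodromy_order_six (p q c : ℤ) :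
    (!![0, -1, 0, -2*p + 2*q;
        1, 1, 0, -2*q;
        0, -1, -1, c;
        0, 0, 0, 1] : Matrix (Fin 4) (Fin 4) ℤ) ^ 6 = 1 ∧
    ∀ k : ℕ, 1 ≤ k → k ≤ 5 →
      (!![0, -1, 0, -2*p + 2*q;
          1, 1, 0, -2*q;
          0, -1, -1, c;
          0, 0, 0, 1] : Matrix (Fin 4) (Fin 4) ℤ) ^ k ≠ 1 := by
  set M : Matrix (Fin 4) (Fin 4) ℤ :=
    !![0, -1, 0, -2*p + 2*q; 1, 1, 0, -2*q; 0, -1, -1, c; 0, 0, 0, 1] with hM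
  have h2 : M ^ 2 = !![-1, -1, 0, -2*p + 4*q; 1, 0, 0, -2*p - 2*q; -1, 0, 1, 2*q; 0, 0, 0, 1] := by
    rw [pow_two, hM, mul_fin_four]
    norm_num
    ring_nf
    exact ⟨trivial, trivial⟩
  have h3 : M ^ 3 = !![-1, 0, 0, 4*q; 0, -1, 0, -4*p; 0, 0, -1, 2*p + c; 0, 0, 0, 1] := by
    rw [pow_succ, h2, hM, mul_fin_four]
    norm_num
    ring_nf
    exact ⟨trivial, trivial⟩
  have h4 : M ^ 4 = !![0, 1, 0, 2*p + 2*q; -1, -1, 0, -4*p + 2*q; 0, 1, 1, 2*p; 0, 0, 0, 1] := by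
    rw [pow_succ, h3, hM, mul_fin_four]
    norm_num
    ring_nf
    exact ⟨trivial, trivial⟩
  have h5 : M ^ 5 = !![1, 1, 0, 2*p; -1, 0, 0, -2*p + 2*q; 1, 0, -1, 2*p - 2*q + c; 0, 0, 0, 1] := by
    rw [pow_succ, h4, hM, mul_fin_four]
    norm_num
    ring_nf
    exact ⟨trivial, trivial⟩
  have h6 : M ^ 6 = 1 := by
    rw [pow_succ, h5, hM, mul_fin_four, one_fin_four]
    norm_num
    ring_nf
  refine ⟨h6, ?_⟩
  intro k hk1 hk5 h
  interval_cases k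
  · rw [pow_one] at h
    have := congrFun (congrFun h 0) 0
    simp [hM, Matrix.one_apply] at this
  · rw [h2] at h
    have := congrFun (congrFun h 0) 0
    simp [Matrix.one_apply] at this
  · rw [h3] at h
    have := congrFun (congrFun h 0) 0
    simp [Matrix.one_apply] at this
  · rw [h4] at h
    have := congrFun (congrFun h 0) 0
    simp [Matrix.one_apply] at this
  · rw [h5] at h
    have := congrFun (congrFun h 0) 1
    simp [Matrix.one_apply] at this
end

section
/- Let H₂ be the 4×4 matrix with rows (1,0,0,0), (0,1,0,0), (0,0,1,0), (1,0,0,1), and for an integer c let H₁(c) be the 4×4 matrix with rows (0,−1,0,−2), (1,1,0,0), (0,−1,−1,c), (0,0,0,1), both regarded as complex matrices. Then for all integers c and c′ there exists an invertible 4×4 complex matrix P such that P·H₁(c) = H₁(c′)·P and P·H₂ = H₂·P; that is, the pairs (H₁(c), H₂) and (H₁(c′), H₂) are simultaneously conjugate over ℂ. -/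
open Matrix

/-- The pairs of local monodromy matrices `(H₁(c), H₂)` and `(H₁(c′), H₂)` of the Briançon
polynomial are simultaneously conjugate over `ℂ`, for all integers `c, c′`. -/
theorem briancon_monodromy_rep_independent_of_c (c c' : ℤ) :
    ∃ P : Matrix (Fin 4) (Fin 4) ℂ, IsUnit P ∧
      P * (!![0, -1, 0, -2;
              1, 1, 0, 0;
              0, -1, -1, (c : ℂ);
              0, 0, 0, 1] : Matrix (Fin 4) (Fin 4) ℂ) =
        (!![0, -1, 0, -2;
            1, 1, 0, 0;
            0, -1, -1, (c' : ℂ);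
            0, 0, 0, 1] : Matrix (Fin 4) (Fin 4) ℂ) * P ∧
      P * (!![1, 0, 0, 0;
              0, 1, 0, 0;
              0, 0, 1, 0;
              1, 0, 0, 1] : Matrix (Fin 4) (Fin 4) ℂ) =
        (!![1, 0, 0, 0;
            0, 1, 0, 0;
            0, 0, 1, 0;
            1, 0, 0, 1] : Matrix (Fin 4) (Fin 4) ℂ) * P := by
  have h1 : (3*(c:ℂ)+2) ≠ 0 := by
    intro h
    have h' : ((3*c+2 : ℤ) : ℂ) = 0 := by push_cast; linear_combination h
    have : (3*c+2 : ℤ) = 0 := by exact_mod_cast h'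
    omega
  have h2 : (3*(c':ℂ)+2) ≠ 0 := by
    intro h
    have h' : ((3*c'+2 : ℤ) : ℂ) = 0 := by push_cast; linear_combination h
    have : (3*c'+2 : ℤ) = 0 := by exact_mod_cast h'
    omega
  refine ⟨!![3*(c:ℂ)+2, 0, 0, 0;
             0, 3*(c:ℂ)+2, 0, 0;
             (c:ℂ)-(c':ℂ), (c':ℂ)-(c:ℂ), 3*(c':ℂ)+2, 0;
             0, 0, 0, 3*(c:ℂ)+2], ?_, ?_, ?_⟩
  · rw [Matrix.isUnit_iff_isUnit_det, isUnit_iff_ne_zero]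
    have hdet : (!![3*(c:ℂ)+2, 0, 0, 0;
             0, 3*(c:ℂ)+2, 0, 0;
             (c:ℂ)-(c':ℂ), (c':ℂ)-(c:ℂ), 3*(c':ℂ)+2, 0;
             0, 0, 0, 3*(c:ℂ)+2] : Matrix (Fin 4) (Fin 4) ℂ).det
        = (3*(c:ℂ)+2)^3 * (3*(c':ℂ)+2) := by
      simp [Matrix.det_succ_row_zero, Fin.sum_univ_succ]
      ring
    rw [hdet]
    exact mul_ne_zero (pow_ne_zero _ h1) h2
  · ext i j
    fin_cases i <;> fin_cases j <;>
      · simp [Matrix.mul_apply, Fin.sum_univ_four, Matrix.vecHead, Matrix.vecTail]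
        try ring
  · ext i j
    fin_cases i <;> fin_cases j <;>
      · simp [Matrix.mul_apply, Fin.sum_univ_four, Matrix.vecHead, Matrix.vecTail]
        try ring
end

section
/- The Briançon polynomial has no critical points: for every (x,y) ∈ ℂ × ℂ, the two partial derivatives of f at (x,y) — the derivative at x of the map t ↦ f(t,y) and the derivative at y of the map t ↦ f(x,t) — are not both zero. -/
/-- The Briançon polynomial. -/
noncomputable def briancon (x y : ℂ) : ℂ :=
  x ^ 2 * (1 + x * y) ^ 4 + 3 * x * (1 + x * y) ^ 3 + (3 - (8 / 3) * x) * (1 + x * y) ^ 2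
    - 4 * (1 + x * y) + y

/-- The Briançon polynomial has no critical points: its two partial derivatives never
vanish simultaneously. -/
theorem briancon_no_critical_points (x y : ℂ) :
    ¬ (deriv (fun t => briancon t y) x = 0 ∧ deriv (fun t => briancon x t) y = 0) := by
  rintro ⟨h1, h2⟩
  have hu : HasDerivAt (fun t : ℂ => 1 + t * y) (0 + 1 * y) x :=
    (hasDerivAt_const x (1 : ℂ)).add ((hasDerivAt_id x).mul_const y)
  have H1 : HasDerivAt (fun t => briancon t y)
      (1/3 + 2*y + 2*x + (22/3)*x*y + 6*x*y^2 + 12*x^2*y + 19*x^2*y^2 + 24*x^3*y^2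
        + 12*x^3*y^3 + 20*x^4*y^3 + 6*x^5*y^4) x := by
    have h := (((((hasDerivAt_pow 2 x).mul (hu.pow 4)).add
        (((hasDerivAt_id x).const_mul (3 : ℂ)).mul (hu.pow 3))).add
        (((hasDerivAt_const x (3 : ℂ)).sub ((hasDerivAt_id x).const_mul ((8 : ℂ)/3))).mul
          (hu.pow 2))).sub (hu.const_mul (4 : ℂ))).add (hasDerivAt_const x y)
    have hfun : (fun t : ℂ => t ^ 2 * (1 + t * y) ^ 4 + 3 * t * (1 + t * y) ^ 3
        + (3 - 8/3 * t) * (1 + t * y) ^ 2 - 4 * (1 + t * y) + y)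
        = fun t => briancon t y := by
      funext t; simp only [briancon]
    simp only [id_eq, Pi.add_def, Pi.mul_def, Pi.sub_def, Pi.pow_def] at h
    rw [hfun] at h
    refine h.congr_deriv ?_
    push_cast
    ring
  have hv : HasDerivAt (fun t : ℂ => 1 + x * t) (0 + x * 1) y :=
    (hasDerivAt_const y (1 : ℂ)).add ((hasDerivAt_id y).const_mul x)
  have H2 : HasDerivAt (fun t => briancon x t)
      (1 + 2*x + (11/3)*x^2 + 6*x^2*y + 4*x^3 + (38/3)*x^3*y + 12*x^4*y + 9*x^4*y^2
        + 12*x^5*y^2 + 4*x^6*y^3) y := by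
    have h := (((((hasDerivAt_const y (x ^ 2)).mul (hv.pow 4)).add
        ((hasDerivAt_const y (3 * x)).mul (hv.pow 3))).add
        ((hasDerivAt_const y (3 - 8/3 * x)).mul (hv.pow 2))).sub
        (hv.const_mul (4 : ℂ))).add (hasDerivAt_id y)
    have hfun : (fun t : ℂ => x ^ 2 * (1 + x * t) ^ 4 + 3 * x * (1 + x * t) ^ 3
        + (3 - 8/3 * x) * (1 + x * t) ^ 2 - 4 * (1 + x * t) + t)
        = fun t => briancon x t := by
      funext t; simp only [briancon]
    simp only [id_eq, Pi.add_def, Pi.mul_def, Pi.sub_def, Pi.pow_def] at h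
    rw [hfun] at h
    refine h.congr_deriv ?_
    ring
  rw [H1.deriv] at h1
  rw [H2.deriv] at h2
  have : (1 : ℂ) = 0 := by
    linear_combination (x^2 + 4*x^3 + 4*x^4*y) * h1 + (1 - 2*x - 8*x^2*y - 6*x^3*y^2) * h2
  exact one_ne_zero this
end

section
/- The fiber {(x,y) ∈ ℂ × ℂ : f(x,y) = −16/9} of the Briançon polynomial is homeomorphic to ℂ ∖ {0}; that is, this irregular fiber is an annulus. -/
/-- Coordinate function on the fiber: the inverse of the parametrization. -/
noncomputable def brT (x y : ℂ) : ℂ :=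
  4 + 4 / 3 * x + 8 * x ^ 2 + 12 * x ^ 2 * y + 16 * x ^ 3 * y + 8 * x ^ 4 * y ^ 2

/-- The parametrization of the irregular fiber by `ℂ ∖ {0}`. -/
noncomputable def brPhi (t : ℂ) : ℂ × ℂ :=
  (3 * t ^ 3 * (t - 4) / 256, -256 * (3 * t ^ 2 + 12 * t + 16) / (9 * t ^ 6))

lemma br_idb (x y : ℂ) :
    3 * (brT x y) ^ 4 - 12 * (brT x y) ^ 3 - 256 * x =
      (briancon x y + 16 / 9) *
        (2304 * x ^ 2 + 3072 * x ^ 3 + 28672 / 3 * x ^ 4 + 15360 * x ^ 4 * y + 4096 * x ^ 5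
          + 24576 * x ^ 5 * y + 12288 * x ^ 6 + 45056 * x ^ 6 * y + 36864 * x ^ 6 * y ^ 2
          + 49152 * x ^ 7 * y + 77824 * x ^ 7 * y ^ 2 + 73728 * x ^ 8 * y ^ 2
          + 36864 * x ^ 8 * y ^ 3 + 49152 * x ^ 9 * y ^ 3 + 12288 * x ^ 10 * y ^ 4) := by
  simp only [brT, briancon]; ring

lemma br_idc (x y : ℂ) :
    3 * (brT x y) ^ 3 * (1 + x * y) - 32 * (brT x y) - 64 =
      (briancon x y + 16 / 9) *
        (192 * x + 1152 * x ^ 2 + 256 * x ^ 3 + 1152 * x ^ 3 * y + 1536 * x ^ 4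
          + 2560 * x ^ 4 * y + 4608 * x ^ 5 * y + 2304 * x ^ 5 * y ^ 2 + 4608 * x ^ 6 * y ^ 2
          + 1536 * x ^ 7 * y ^ 3) := by
  simp only [brT, briancon]; ring

lemma br_mem' (t a : ℂ) (h : t * a = 1) :
    briancon (3 * t ^ 3 * (t - 4) / 256) (-256 * (3 * t ^ 2 + 12 * t + 16) * a ^ 6 / 9)
      = -16 / 9 := by
  simp only [briancon]
  linear_combination
    (((-7 : ℂ)/9) + ((4096 : ℂ)/9) * a ^ 6 + ((-7 : ℂ)/9) * t * a + ((1024 : ℂ)/3) * t * a ^ 6 + ((4096 : ℂ)/9) * t * a ^ 7 + ((-7 : ℂ)/9) * t ^ 2 * a ^ 2 + ((256 : ℂ)/3) * t ^ 2 * a ^ 6 + ((1024 : ℂ)/3) * t ^ 2 * a ^ 7 + ((4096 : ℂ)/9) * t ^ 2 * a ^ 8 + ((1 : ℂ)/64) * t ^ 3 + ((-7 : ℂ)/9) * t ^ 3 * a ^ 3 + ((-128 : ℂ)/3) * t ^ 3 * a ^ 6 + ((256 : ℂ)/3) * t ^ 3 * a ^ 7 + ((1024 : ℂ)/3) * t ^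 3 * a ^ 8 + ((4096 : ℂ)/9) * t ^ 3 * a ^ 9 + ((-1 : ℂ)/256) * t ^ 4 + ((1 : ℂ)/64) * t ^ 4 * a + ((-7 : ℂ)/9) * t ^ 4 * a ^ 4 + ((-64 : ℂ)/3) * t ^ 4 * a ^ 6 + ((-128 : ℂ)/3) * t ^ 4 * a ^ 7 + ((256 : ℂ)/3) * t ^ 4 * a ^ 8 + ((1024 : ℂ)/3) * t ^ 4 * a ^ 9 + ((4096 : ℂ)/9) * t ^ 4 * a ^ 10 + ((-1 : ℂ)/256) * t ^ 5 * a + ((1 : ℂ)/64) * t ^ 5 * a ^ 2 + ((-7 : ℂ)/9) * t ^ 5 * a ^ 5 + ((-64 : ℂ)/3) * t ^ 5 * a ^ 7 + ((-128 : ℂ)/3) * t ^ 5 * a ^ 8 + ((256 : ℂ)/3) * t ^ 5 * a ^ 9 + ((1024 : ℂ)/3) * t ^ 5 * a ^ 10 + ((4096 : ℂ)/9) * t ^ 5 * a ^ 11 + ((-9 : ℂ)/4096) * t ^ 6 + ((-1 : ℂ)/256) * t ^ 6 * a ^ 2 + ((1 : ℂ)/64) * t ^ 6 * a ^ 3 +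 ((44 : ℂ)/9) * t ^ 6 * a ^ 6 + ((-64 : ℂ)/3) * t ^ 6 * a ^ 8 + ((-128 : ℂ)/3) * t ^ 6 * a ^ 9 + ((256 : ℂ)/3) * t ^ 6 * a ^ 10 + ((1024 : ℂ)/3) * t ^ 6 * a ^ 11 + ((-8192 : ℂ)/9) * t ^ 6 * a ^ 12 + ((9 : ℂ)/8192) * t ^ 7 + ((-9 : ℂ)/4096) * t ^ 7 * a + ((-1 : ℂ)/256) * t ^ 7 * a ^ 3 + ((1 : ℂ)/64) * t ^ 7 * a ^ 4 + ((11 : ℂ)/12) * t ^ 7 * a ^ 6 + ((44 : ℂ)/9) * t ^ 7 * a ^ 7 + ((-64 : ℂ)/3) * t ^ 7 * a ^ 9 + ((-128 : ℂ)/3) * t ^ 7 * a ^ 10 + ((256 : ℂ)/3) * t ^ 7 * a ^ 11 + (-1024 : ℂ) * t ^ 7 * a ^ 12 + ((-8192 : ℂ)/9) * t ^ 7 * a ^ 13 + ((-9 : ℂ)/65536) * t ^ 8 + ((9 : ℂ)/8192) * t ^ 8 * a + ((-9 : ℂ)/4096) * t ^ 8 * a ^ 2 + ((-1 : ℂ)/256)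 * t ^ 8 * a ^ 4 + ((1 : ℂ)/64) * t ^ 8 * a ^ 5 + ((-11 : ℂ)/24) * t ^ 8 * a ^ 6 + ((11 : ℂ)/12) * t ^ 8 * a ^ 7 + ((44 : ℂ)/9) * t ^ 8 * a ^ 8 + ((-64 : ℂ)/3) * t ^ 8 * a ^ 10 + ((-128 : ℂ)/3) * t ^ 8 * a ^ 11 + (-256 : ℂ) * t ^ 8 * a ^ 12 + (-1024 : ℂ) * t ^ 8 * a ^ 13 + ((-8192 : ℂ)/9) * t ^ 8 * a ^ 14 + ((-9 : ℂ)/65536) * t ^ 9 * a + ((9 : ℂ)/8192) * t ^ 9 * a ^ 2 + ((-9 : ℂ)/4096) * t ^ 9 * a ^ 3 + ((-1 : ℂ)/256) * t ^ 9 * a ^ 5 + ((-11 : ℂ)/32) * t ^ 9 * a ^ 6 + ((-11 : ℂ)/24) * t ^ 9 * a ^ 7 + ((11 : ℂ)/12) * t ^ 9 * a ^ 8 + ((44 : ℂ)/9) * t ^ 9 * a ^ 9 + ((-64 : ℂ)/3) * t ^ 9 * a ^ 11 + ((1984 : ℂ)/9) * t ^ 9 * a ^ 12 + (-256 : ℂ)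 * t ^ 9 * a ^ 13 + (-1024 : ℂ) * t ^ 9 * a ^ 14 + ((-8192 : ℂ)/9) * t ^ 9 * a ^ 15 + ((-9 : ℂ)/65536) * t ^ 10 * a ^ 2 + ((9 : ℂ)/8192) * t ^ 10 * a ^ 3 + ((-9 : ℂ)/4096) * t ^ 10 * a ^ 4 + ((5 : ℂ)/128) * t ^ 10 * a ^ 6 + ((-11 : ℂ)/32) * t ^ 10 * a ^ 7 + ((-11 : ℂ)/24) * t ^ 10 * a ^ 8 + ((11 : ℂ)/12) * t ^ 10 * a ^ 9 + ((44 : ℂ)/9) * t ^ 10 * a ^ 10 + (144 : ℂ) * t ^ 10 * a ^ 12 + ((1984 : ℂ)/9) * t ^ 10 * a ^ 13 + (-256 : ℂ) * t ^ 10 * a ^ 14 + (-1024 : ℂ) * t ^ 10 * a ^ 15 + ((-8192 : ℂ)/9) * t ^ 10 * a ^ 16 + ((-9 : ℂ)/65536) * t ^ 11 * a ^ 3 + ((9 : ℂ)/8192) * t ^ 11 * a ^ 4 + ((-9 : ℂ)/4096) * t ^ 11 * a ^ 5 + ((9 : ℂ)/256) * t ^ 11 * a ^ 6 + ((5 : ℂ)/128)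 * t ^ 11 * a ^ 7 + ((-11 : ℂ)/32) * t ^ 11 * a ^ 8 + ((-11 : ℂ)/24) * t ^ 11 * a ^ 9 + ((11 : ℂ)/12) * t ^ 11 * a ^ 10 + ((44 : ℂ)/9) * t ^ 11 * a ^ 11 + (144 : ℂ) * t ^ 11 * a ^ 13 + ((1984 : ℂ)/9) * t ^ 11 * a ^ 14 + (-256 : ℂ) * t ^ 11 * a ^ 15 + (-1024 : ℂ) * t ^ 11 * a ^ 16 + ((-8192 : ℂ)/9) * t ^ 11 * a ^ 17 + ((-9 : ℂ)/65536) * t ^ 12 * a ^ 4 + ((9 : ℂ)/8192) * t ^ 12 * a ^ 5 + ((3 : ℂ)/4096) * t ^ 12 * a ^ 6 + ((9 : ℂ)/256) * t ^ 12 * a ^ 7 + ((5 : ℂ)/128) * t ^ 12 * a ^ 8 + ((-11 : ℂ)/32) * t ^ 12 * a ^ 9 + ((-11 : ℂ)/24) * t ^ 12 * a ^ 10 + ((11 : ℂ)/12) * t ^ 12 * a ^ 11 + ((-227 : ℂ)/9) * t ^ 12 * a ^ 12 + (144 : ℂ) * t ^ 12 * a ^ 14 + ((1984 : ℂ)/9)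 * t ^ 12 * a ^ 15 + (-256 : ℂ) * t ^ 12 * a ^ 16 + (-1024 : ℂ) * t ^ 12 * a ^ 17 + ((4096 : ℂ)/9) * t ^ 12 * a ^ 18 + ((-9 : ℂ)/65536) * t ^ 13 * a ^ 5 + ((-27 : ℂ)/8192) * t ^ 13 * a ^ 6 + ((3 : ℂ)/4096) * t ^ 13 * a ^ 7 + ((9 : ℂ)/256) * t ^ 13 * a ^ 8 + ((5 : ℂ)/128) * t ^ 13 * a ^ 9 + ((-11 : ℂ)/32) * t ^ 13 * a ^ 10 + ((-11 : ℂ)/24) * t ^ 13 * a ^ 11 + ((-21 : ℂ)/4) * t ^ 13 * a ^ 12 + ((-227 : ℂ)/9) * t ^ 13 * a ^ 13 + (144 : ℂ) * t ^ 13 * a ^ 15 + ((1984 : ℂ)/9) * t ^ 13 * a ^ 16 + (-256 : ℂ) * t ^ 13 * a ^ 17 + ((2048 : ℂ)/3) * t ^ 13 * a ^ 18 + ((4096 : ℂ)/9) * t ^ 13 * a ^ 19 + ((27 : ℂ)/65536) * t ^ 14 * a ^ 6 + ((-27 : ℂ)/8192) * t ^ 14 * a ^ 7 + ((3 : ℂ)/4096)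 * t ^ 14 * a ^ 8 + ((9 : ℂ)/256) * t ^ 14 * a ^ 9 + ((5 : ℂ)/128) * t ^ 14 * a ^ 10 + ((-11 : ℂ)/32) * t ^ 14 * a ^ 11 + ((9 : ℂ)/4) * t ^ 14 * a ^ 12 + ((-21 : ℂ)/4) * t ^ 14 * a ^ 13 + ((-227 : ℂ)/9) * t ^ 14 * a ^ 14 + (144 : ℂ) * t ^ 14 * a ^ 16 + ((1984 : ℂ)/9) * t ^ 14 * a ^ 17 + (256 : ℂ) * t ^ 14 * a ^ 18 + ((2048 : ℂ)/3) * t ^ 14 * a ^ 19 + ((4096 : ℂ)/9) * t ^ 14 * a ^ 20 + ((27 : ℂ)/65536) * t ^ 15 * a ^ 7 + ((-27 : ℂ)/8192) * t ^ 15 * a ^ 8 + ((3 : ℂ)/4096) * t ^ 15 * a ^ 9 + ((9 : ℂ)/256) * t ^ 15 * a ^ 10 + ((5 : ℂ)/128) * t ^ 15 * a ^ 11 + ((57 : ℂ)/64) * t ^ 15 * a ^ 12 + ((9 : ℂ)/4) * t ^ 15 * a ^ 13 + ((-21 : ℂ)/4) * t ^ 15 * a ^ 14 + ((-227 : ℂ)/9)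 * t ^ 15 * a ^ 15 + (144 : ℂ) * t ^ 15 * a ^ 17 + ((-1280 : ℂ)/9) * t ^ 15 * a ^ 18 + (256 : ℂ) * t ^ 15 * a ^ 19 + ((2048 : ℂ)/3) * t ^ 15 * a ^ 20 + ((4096 : ℂ)/9) * t ^ 15 * a ^ 21 + ((27 : ℂ)/65536) * t ^ 16 * a ^ 8 + ((-27 : ℂ)/8192) * t ^ 16 * a ^ 9 + ((3 : ℂ)/4096) * t ^ 16 * a ^ 10 + ((9 : ℂ)/256) * t ^ 16 * a ^ 11 + ((-33 : ℂ)/256) * t ^ 16 * a ^ 12 + ((57 : ℂ)/64) * t ^ 16 * a ^ 13 + ((9 : ℂ)/4) * t ^ 16 * a ^ 14 + ((-21 : ℂ)/4) * t ^ 16 * a ^ 15 + ((-227 : ℂ)/9) * t ^ 16 * a ^ 16 + (-128 : ℂ) * t ^ 16 * a ^ 18 + ((-1280 : ℂ)/9) * t ^ 16 * a ^ 19 + (256 : ℂ) * t ^ 16 * a ^ 20 + ((2048 : ℂ)/3) * t ^ 16 * a ^ 21 + ((4096 : ℂ)/9) * t ^ 16 * a ^ 22 + ((27 : ℂ)/65536)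 * t ^ 17 * a ^ 9 + ((-27 : ℂ)/8192) * t ^ 17 * a ^ 10 + ((3 : ℂ)/4096) * t ^ 17 * a ^ 11 + ((-9 : ℂ)/128) * t ^ 17 * a ^ 12 + ((-33 : ℂ)/256) * t ^ 17 * a ^ 13 + ((57 : ℂ)/64) * t ^ 17 * a ^ 14 + ((9 : ℂ)/4) * t ^ 17 * a ^ 15 + ((-21 : ℂ)/4) * t ^ 17 * a ^ 16 + ((-227 : ℂ)/9) * t ^ 17 * a ^ 17 + ((-16 : ℂ)/3) * t ^ 17 * a ^ 18 + (-128 : ℂ) * t ^ 17 * a ^ 19 + ((-1280 : ℂ)/9) * t ^ 17 * a ^ 20 + (256 : ℂ) * t ^ 17 * a ^ 21 + ((2048 : ℂ)/3) * t ^ 17 * a ^ 22 + ((4096 : ℂ)/9) * t ^ 17 * a ^ 23 + ((27 : ℂ)/65536) * t ^ 18 * a ^ 10 + ((-27 : ℂ)/8192) * t ^ 18 * a ^ 11 + ((21 : ℂ)/4096) * t ^ 18 * a ^ 12 + ((-9 : ℂ)/128) * t ^ 18 * a ^ 13 + ((-33 : ℂ)/256) * t ^ 18 * a ^ 14 + ((57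 : ℂ)/64) * t ^ 18 * a ^ 15 + ((9 : ℂ)/4) * t ^ 18 * a ^ 16 + ((-21 : ℂ)/4) * t ^ 18 * a ^ 17 + ((190 : ℂ)/9) * t ^ 18 * a ^ 18 + ((-16 : ℂ)/3) * t ^ 18 * a ^ 19 + (-128 : ℂ) * t ^ 18 * a ^ 20 + ((-1280 : ℂ)/9) * t ^ 18 * a ^ 21 + (256 : ℂ) * t ^ 18 * a ^ 22 + ((2048 : ℂ)/3) * t ^ 18 * a ^ 23 + ((27 : ℂ)/65536) * t ^ 19 * a ^ 11 + ((27 : ℂ)/8192) * t ^ 19 * a ^ 12 + ((21 : ℂ)/4096) * t ^ 19 * a ^ 13 + ((-9 : ℂ)/128) * t ^ 19 * a ^ 14 + ((-33 : ℂ)/256) * t ^ 19 * a ^ 15 + ((57 : ℂ)/64) * t ^ 19 * a ^ 16 + ((9 : ℂ)/4) * t ^ 19 * a ^ 17 + ((13 : ℂ)/3) * t ^ 19 * a ^ 18 + ((190 : ℂ)/9) * t ^ 19 * a ^ 19 + ((-16 : ℂ)/3) * t ^ 19 * a ^ 20 + (-128 : ℂ) * t ^ 19 * a ^ 21 + ((-1280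 : ℂ)/9) * t ^ 19 * a ^ 22 + (256 : ℂ) * t ^ 19 * a ^ 23 + ((-27 : ℂ)/65536) * t ^ 20 * a ^ 12 + ((27 : ℂ)/8192) * t ^ 20 * a ^ 13 + ((21 : ℂ)/4096) * t ^ 20 * a ^ 14 + ((-9 : ℂ)/128) * t ^ 20 * a ^ 15 + ((-33 : ℂ)/256) * t ^ 20 * a ^ 16 + ((57 : ℂ)/64) * t ^ 20 * a ^ 17 + ((-43 : ℂ)/24) * t ^ 20 * a ^ 18 + ((13 : ℂ)/3) * t ^ 20 * a ^ 19 + ((190 : ℂ)/9) * t ^ 20 * a ^ 20 + ((-16 : ℂ)/3) * t ^ 20 * a ^ 21 + (-128 : ℂ) * t ^ 20 * a ^ 22 + ((-1280 : ℂ)/9) * t ^ 20 * a ^ 23 + ((-27 : ℂ)/65536) * t ^ 21 * a ^ 13 + ((27 : ℂ)/8192) * t ^ 21 * a ^ 14 + ((21 : ℂ)/4096) * t ^ 21 * a ^ 15 + ((-9 : ℂ)/128) * t ^ 21 * a ^ 16 + ((-33 : ℂ)/256) * t ^ 21 * a ^ 17 + ((-9 : ℂ)/16) * t ^ 21 * a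 ^ 18 + ((-43 : ℂ)/24) * t ^ 21 * a ^ 19 + ((13 : ℂ)/3) * t ^ 21 * a ^ 20 + ((190 : ℂ)/9) * t ^ 21 * a ^ 21 + ((-16 : ℂ)/3) * t ^ 21 * a ^ 22 + (-128 : ℂ) * t ^ 21 * a ^ 23 + ((-27 : ℂ)/65536) * t ^ 22 * a ^ 14 + ((27 : ℂ)/8192) * t ^ 22 * a ^ 15 + ((21 : ℂ)/4096) * t ^ 22 * a ^ 16 + ((-9 : ℂ)/128) * t ^ 22 * a ^ 17 + ((3 : ℂ)/32) * t ^ 22 * a ^ 18 + ((-9 : ℂ)/16) * t ^ 22 * a ^ 19 + ((-43 : ℂ)/24) * t ^ 22 * a ^ 20 + ((13 : ℂ)/3) * t ^ 22 * a ^ 21 + ((190 : ℂ)/9) * t ^ 22 * a ^ 22 + ((-16 : ℂ)/3) * t ^ 22 * a ^ 23 + ((-27 : ℂ)/65536) * t ^ 23 * a ^ 15 + ((27 : ℂ)/8192) * t ^ 23 * a ^ 16 + ((21 : ℂ)/4096) * t ^ 23 * a ^ 17 + ((9 : ℂ)/256) * t ^ 23 * a ^ 18 + ((3 : ℂ)/32)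 * t ^ 23 * a ^ 19 + ((-9 : ℂ)/16) * t ^ 23 * a ^ 20 + ((-43 : ℂ)/24) * t ^ 23 * a ^ 21 + ((13 : ℂ)/3) * t ^ 23 * a ^ 22 + ((190 : ℂ)/9) * t ^ 23 * a ^ 23 + ((-27 : ℂ)/65536) * t ^ 24 * a ^ 16 + ((27 : ℂ)/8192) * t ^ 24 * a ^ 17 + ((-15 : ℂ)/4096) * t ^ 24 * a ^ 18 + ((9 : ℂ)/256) * t ^ 24 * a ^ 19 + ((3 : ℂ)/32) * t ^ 24 * a ^ 20 + ((-9 : ℂ)/16) * t ^ 24 * a ^ 21 + ((-43 : ℂ)/24) * t ^ 24 * a ^ 22 + ((13 : ℂ)/3) * t ^ 24 * a ^ 23 + ((-27 : ℂ)/65536) * t ^ 25 * a ^ 17 + ((-9 : ℂ)/8192) * t ^ 25 * a ^ 18 + ((-15 : ℂ)/4096) * t ^ 25 * a ^ 19 + ((9 : ℂ)/256) * t ^ 25 * a ^ 20 + ((3 : ℂ)/32) * t ^ 25 * a ^ 21 + ((-9 : ℂ)/16) * t ^ 25 * a ^ 22 + ((-43 : ℂ)/24) * t ^ 25 * a ^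 23 + ((9 : ℂ)/65536) * t ^ 26 * a ^ 18 + ((-9 : ℂ)/8192) * t ^ 26 * a ^ 19 + ((-15 : ℂ)/4096) * t ^ 26 * a ^ 20 + ((9 : ℂ)/256) * t ^ 26 * a ^ 21 + ((3 : ℂ)/32) * t ^ 26 * a ^ 22 + ((-9 : ℂ)/16) * t ^ 26 * a ^ 23 + ((9 : ℂ)/65536) * t ^ 27 * a ^ 19 + ((-9 : ℂ)/8192) * t ^ 27 * a ^ 20 + ((-15 : ℂ)/4096) * t ^ 27 * a ^ 21 + ((9 : ℂ)/256) * t ^ 27 * a ^ 22 + ((3 : ℂ)/32) * t ^ 27 * a ^ 23 + ((9 : ℂ)/65536) * t ^ 28 * a ^ 20 + ((-9 : ℂ)/8192) * t ^ 28 * a ^ 21 + ((-15 : ℂ)/4096) * t ^ 28 * a ^ 22 + ((9 : ℂ)/256) * t ^ 28 * a ^ 23 + ((9 : ℂ)/65536) * t ^ 29 * a ^ 21 + ((-9 : ℂ)/8192) * t ^ 29 * a ^ 22 + ((-15 : ℂ)/4096) * t ^ 29 * a ^ 23 + ((9 : ℂ)/65536) * t ^ 30 * a ^ 22 + ((-9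 : ℂ)/8192) * t ^ 30 * a ^ 23 + ((9 : ℂ)/65536) * t ^ 31 * a ^ 23) * h

lemma br_leftinv' (t a : ℂ) (h : t * a = 1) :
    brT (3 * t ^ 3 * (t - 4) / 256) (-256 * (3 * t ^ 2 + 12 * t + 16) * a ^ 6 / 9) = t := by
  simp only [brT]
  linear_combination
    ((-4 : ℂ) + (1 : ℂ) * t + (-4 : ℂ) * t * a + (1 : ℂ) * t ^ 2 * a + (-4 : ℂ) * t ^ 2 * a ^ 2 + ((1 : ℂ)/16) * t ^ 3 + (1 : ℂ) * t ^ 3 * a ^ 2 + (-4 : ℂ) * t ^ 3 * a ^ 3 + ((-1 : ℂ)/64) * t ^ 4 + ((1 : ℂ)/16) * t ^ 4 * a + (1 : ℂ) * t ^ 4 * a ^ 3 + (-4 : ℂ) * t ^ 4 * a ^ 4 + ((-1 : ℂ)/64) * t ^ 5 * a + ((1 : ℂ)/16) * t ^ 5 * a ^ 2 + (1 : ℂ) * t ^ 5 * a ^ 4 + (-4 : ℂ) * t ^ 5 * a ^ 5 + ((-9 : ℂ)/512) * t ^ 6 + ((-1 : ℂ)/64) * t ^ 6 * a ^ 2 +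 ((1 : ℂ)/16) * t ^ 6 * a ^ 3 + (1 : ℂ) * t ^ 6 * a ^ 5 + (8 : ℂ) * t ^ 6 * a ^ 6 + ((9 : ℂ)/1024) * t ^ 7 + ((-9 : ℂ)/512) * t ^ 7 * a + ((-1 : ℂ)/64) * t ^ 7 * a ^ 3 + ((1 : ℂ)/16) * t ^ 7 * a ^ 4 + (4 : ℂ) * t ^ 7 * a ^ 6 + (8 : ℂ) * t ^ 7 * a ^ 7 + ((-9 : ℂ)/8192) * t ^ 8 + ((9 : ℂ)/1024) * t ^ 8 * a + ((-9 : ℂ)/512) * t ^ 8 * a ^ 2 + ((-1 : ℂ)/64) * t ^ 8 * a ^ 4 + ((1 : ℂ)/16) * t ^ 8 * a ^ 5 + ((-3 : ℂ)/2) * t ^ 8 * a ^ 6 + (4 : ℂ) * t ^ 8 * a ^ 7 + (8 : ℂ) * t ^ 8 * a ^ 8 + ((-9 : ℂ)/8192) * t ^ 9 * a + ((9 : ℂ)/1024) * t ^ 9 * a ^ 2 + ((-9 : ℂ)/512) * t ^ 9 * a ^ 3 + ((-1 : ℂ)/64) * t ^ 9 * a ^ 5 + ((-5 : ℂ)/4)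 * t ^ 9 * a ^ 6 + ((-3 : ℂ)/2) * t ^ 9 * a ^ 7 + (4 : ℂ) * t ^ 9 * a ^ 8 + (8 : ℂ) * t ^ 9 * a ^ 9 + ((-9 : ℂ)/8192) * t ^ 10 * a ^ 2 + ((9 : ℂ)/1024) * t ^ 10 * a ^ 3 + ((-9 : ℂ)/512) * t ^ 10 * a ^ 4 + ((1 : ℂ)/8) * t ^ 10 * a ^ 6 + ((-5 : ℂ)/4) * t ^ 10 * a ^ 7 + ((-3 : ℂ)/2) * t ^ 10 * a ^ 8 + (4 : ℂ) * t ^ 10 * a ^ 9 + (8 : ℂ) * t ^ 10 * a ^ 10 + ((-9 : ℂ)/8192) * t ^ 11 * a ^ 3 + ((9 : ℂ)/1024) * t ^ 11 * a ^ 4 + ((-9 : ℂ)/512) * t ^ 11 * a ^ 5 + ((9 : ℂ)/64) * t ^ 11 * a ^ 6 + ((1 : ℂ)/8) * t ^ 11 * a ^ 7 + ((-5 : ℂ)/4) * t ^ 11 * a ^ 8 + ((-3 : ℂ)/2) * t ^ 11 * a ^ 9 + (4 : ℂ) * t ^ 11 * a ^ 10 + (8 : ℂ) * t ^ 11 * a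 ^ 11 + ((-9 : ℂ)/8192) * t ^ 12 * a ^ 4 + ((9 : ℂ)/1024) * t ^ 12 * a ^ 5 + ((-3 : ℂ)/512) * t ^ 12 * a ^ 6 + ((9 : ℂ)/64) * t ^ 12 * a ^ 7 + ((1 : ℂ)/8) * t ^ 12 * a ^ 8 + ((-5 : ℂ)/4) * t ^ 12 * a ^ 9 + ((-3 : ℂ)/2) * t ^ 12 * a ^ 10 + (4 : ℂ) * t ^ 12 * a ^ 11 + ((-9 : ℂ)/8192) * t ^ 13 * a ^ 5 + ((-9 : ℂ)/1024) * t ^ 13 * a ^ 6 + ((-3 : ℂ)/512) * t ^ 13 * a ^ 7 + ((9 : ℂ)/64) * t ^ 13 * a ^ 8 + ((1 : ℂ)/8) * t ^ 13 * a ^ 9 + ((-5 : ℂ)/4) * t ^ 13 * a ^ 10 + ((-3 : ℂ)/2) * t ^ 13 * a ^ 11 + ((9 : ℂ)/8192) * t ^ 14 * a ^ 6 + ((-9 : ℂ)/1024) * t ^ 14 * a ^ 7 + ((-3 : ℂ)/512) * t ^ 14 * a ^ 8 + ((9 : ℂ)/64) * t ^ 14 * a ^ 9 + ((1 : ℂ)/8)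 * t ^ 14 * a ^ 10 + ((-5 : ℂ)/4) * t ^ 14 * a ^ 11 + ((9 : ℂ)/8192) * t ^ 15 * a ^ 7 + ((-9 : ℂ)/1024) * t ^ 15 * a ^ 8 + ((-3 : ℂ)/512) * t ^ 15 * a ^ 9 + ((9 : ℂ)/64) * t ^ 15 * a ^ 10 + ((1 : ℂ)/8) * t ^ 15 * a ^ 11 + ((9 : ℂ)/8192) * t ^ 16 * a ^ 8 + ((-9 : ℂ)/1024) * t ^ 16 * a ^ 9 + ((-3 : ℂ)/512) * t ^ 16 * a ^ 10 + ((9 : ℂ)/64) * t ^ 16 * a ^ 11 + ((9 : ℂ)/8192) * t ^ 17 * a ^ 9 + ((-9 : ℂ)/1024) * t ^ 17 * a ^ 10 + ((-3 : ℂ)/512) * t ^ 17 * a ^ 11 + ((9 : ℂ)/8192) * t ^ 18 * a ^ 10 + ((-9 : ℂ)/1024) * t ^ 18 * a ^ 11 + ((9 : ℂ)/8192) * t ^ 19 * a ^ 11) * h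

lemma br_mem {t : ℂ} (ht : t ≠ 0) :
    briancon (3 * t ^ 3 * (t - 4) / 256) (-256 * (3 * t ^ 2 + 12 * t + 16) / (9 * t ^ 6))
      = -16 / 9 := by
  have ha : -256 * (3 * t ^ 2 + 12 * t + 16) / (9 * t ^ 6)
      = -256 * (3 * t ^ 2 + 12 * t + 16) * (t⁻¹) ^ 6 / 9 := by
    field_simp
  rw [ha]
  exact br_mem' t t⁻¹ (mul_inv_cancel₀ ht)

lemma br_leftinv {t : ℂ} (ht : t ≠ 0) :
    brT (3 * t ^ 3 * (t - 4) / 256) (-256 * (3 * t ^ 2 + 12 * t + 16) / (9 * t ^ 6)) = t := by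
  have ha : -256 * (3 * t ^ 2 + 12 * t + 16) / (9 * t ^ 6)
      = -256 * (3 * t ^ 2 + 12 * t + 16) * (t⁻¹) ^ 6 / 9 := by
    field_simp
  rw [ha]
  exact br_leftinv' t t⁻¹ (mul_inv_cancel₀ ht)

lemma br_key {x y : ℂ} (hf : briancon x y = -16 / 9) :
    brT x y ≠ 0 ∧ 3 * (brT x y) ^ 3 * (brT x y - 4) / 256 = x ∧
      -256 * (3 * (brT x y) ^ 2 + 12 * (brT x y) + 16) / (9 * (brT x y) ^ 6) = y := by
  have h0 : briancon x y + 16 / 9 = 0 := by rw [hf]; ring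
  have hb : 3 * (brT x y) ^ 4 - 12 * (brT x y) ^ 3 - 256 * x = 0 := by
    rw [br_idb, h0, zero_mul]
  have hc : 3 * (brT x y) ^ 3 * (1 + x * y) - 32 * (brT x y) - 64 = 0 := by
    rw [br_idc, h0, zero_mul]
  have htne : brT x y ≠ 0 := by
    intro h
    rw [h] at hb
    have hx0 : x = 0 := by linear_combination (-(1 : ℂ) / 256) * hb
    have hy : y = -7 / 9 := by
      rw [hx0] at hf
      simp only [briancon] at hf
      linear_combination hf
    rw [hx0, hy] at h
    simp only [brT] at h
    norm_num at h
  refine ⟨htne, ?_, ?_⟩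
  · field_simp
    linear_combination hb
  · have h6 : (9 : ℂ) * (brT x y) ^ 6 ≠ 0 :=
      mul_ne_zero (by norm_num) (pow_ne_zero _ htne)
    by_cases h4 : brT x y = 4
    · -- then x = 0 and y = -7/9
      rw [h4] at hb
      have hx0 : x = 0 := by linear_combination (-(1 : ℂ) / 256) * hb
      have hy : y = -7 / 9 := by
        rw [hx0] at hf
        simp only [briancon] at hf
        linear_combination hf
      rw [h4, hy]
      norm_num
    · have h4' : brT x y - 4 ≠ 0 := sub_ne_zero_of_ne h4
      have hkey : 9 * (brT x y) ^ 6 * y * (brT x y - 4) =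
          -256 * (3 * (brT x y) ^ 2 + 12 * (brT x y) + 16) * (brT x y - 4) := by
        linear_combination 256 * hc + 3 * (brT x y) ^ 3 * y * hb
      have h2 : 9 * (brT x y) ^ 6 * y =
          -256 * (3 * (brT x y) ^ 2 + 12 * (brT x y) + 16) :=
        mul_right_cancel₀ h4' hkey
      field_simp
      linear_combination -h2

/-- The irregular fiber of the Briançon polynomial over `−16/9` is an annulus:
it is homeomorphic to `ℂ ∖ {0}`. -/
theorem briancon_fiber_annulus :
    Nonempty (({p : ℂ × ℂ | briancon p.1 p.2 = -16 / 9} : Set (ℂ × ℂ)) ≃ₜ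
      (({0}ᶜ : Set ℂ) : Set ℂ)) := by
  refine ⟨(Homeomorph.mk ?_ ?_ ?_).symm⟩
  · refine Equiv.mk
      (fun t => ⟨brPhi t.1, ?_⟩)
      (fun p => ⟨brT p.1.1 p.1.2, ?_⟩) ?_ ?_
    · exact br_mem t.2
    · have hp : briancon p.1.1 p.1.2 = -16 / 9 := p.2
      simpa using (br_key hp).1
    · rintro ⟨t, ht⟩
      apply Subtype.ext
      exact br_leftinv ht
    · rintro ⟨⟨x, y⟩, hp⟩
      have hp' : briancon x y = -16 / 9 := hp
      obtain ⟨h1, h2, h3⟩ := br_key hp'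
      apply Subtype.ext
      simp only [brPhi]
      exact Prod.ext h2 h3
  · apply Continuous.subtype_mk
    simp only [brPhi]
    refine Continuous.prodMk ?_ ?_
    · fun_prop
    · refine Continuous.div (by fun_prop) (by fun_prop) ?_
      intro t
      exact mul_ne_zero (by norm_num) (pow_ne_zero _ t.2)
  · apply Continuous.subtype_mk
    simp only [brT]
    fun_prop
end

section
/- Let p be a nonconstant polynomial with complex coefficients and let s ≥ 0. Then the set {z ∈ ℂ : |p(z)| > s} is connected and unbounded, and its complement {z ∈ ℂ : |p(z)| ≤ s} is compact. In particular every connected component of {z ∈ ℂ : |p(z)| > s} is unbounded. -/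
open Set Metric Bornology Filter

/-- The exterior of a ball in `ℂ` is connected. -/
lemma exterior_ball_connected (R : ℝ) (hR : 0 ≤ R) :
    IsConnected {x : ℂ | R < ‖x‖} := by
  have hrank : 1 < Module.rank ℝ ℂ := by
    rw [Complex.rank_real_complex]; norm_num
  have hsph : IsConnected (sphere (0 : ℂ) 1) := isConnected_sphere hrank 0 zero_le_one
  have hIoi : IsConnected (Ioi R) := isConnected_Ioi
  have hprod : IsConnected ((Ioi R) ×ˢ (sphere (0 : ℂ) 1)) := hIoi.prod hsph
  have himg := hprod.image (fun p : ℝ × ℂ => p.1 • p.2)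
    (continuous_fst.smul continuous_snd).continuousOn
  convert himg using 1
  ext x
  simp only [mem_image, mem_prod, mem_Ioi, mem_sphere_iff_norm, sub_zero, mem_setOf_eq]
  constructor
  · intro hx
    have hx0 : ‖x‖ ≠ 0 := (lt_of_le_of_lt hR hx).ne'
    refine ⟨(‖x‖, ‖x‖⁻¹ • x), ⟨hx, ?_⟩, ?_⟩
    · rw [norm_smul, norm_inv, norm_norm, inv_mul_cancel₀ hx0]
    · rw [smul_smul, mul_inv_cancel₀ hx0, one_smul]
  · rintro ⟨⟨r, u⟩, ⟨hr, hu⟩, rfl⟩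
    have : (0:ℝ) ≤ r := le_trans hR hr.le
    simp [norm_smul, hu, abs_of_nonneg this, hr]

/-- For a nonconstant complex polynomial `p` and `s ≥ 0`, the set `{z : |p(z)| > s}` is
connected and unbounded, its complement `{z : |p(z)| ≤ s}` is compact, and every connected
component of `{z : |p(z)| > s}` is unbounded. -/
theorem polynomial_superlevel_set_connected_unbounded (p : Polynomial ℂ)
    (hp : 1 ≤ p.natDegree) (s : ℝ) (hs : 0 ≤ s) :
    IsConnected {z : ℂ | s < ‖p.eval z‖} ∧
    ¬ Bornology.IsBounded {z : ℂ | s < ‖p.eval z‖} ∧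
    IsCompact {z : ℂ | ‖p.eval z‖ ≤ s} ∧
    ∀ z ∈ {z : ℂ | s < ‖p.eval z‖},
      ¬ Bornology.IsBounded
        (connectedComponentIn {z : ℂ | s < ‖p.eval z‖} z) := by
  set A := {z : ℂ | s < ‖p.eval z‖} with hA
  have hpd : 0 < p.degree := Polynomial.natDegree_pos_iff_degree_pos.mp hp
  have hcont : Continuous fun z : ℂ => ‖p.eval z‖ := (p.continuous).norm
  have hopen : IsOpen A := isOpen_lt continuous_const hcont
  have htends : Tendsto (fun z : ℂ => ‖p.eval z‖) (cocompact ℂ) atTop :=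
    p.tendsto_norm_atTop hpd tendsto_norm_cocompact_atTop
  -- find a radius R beyond which |p| > s
  obtain ⟨K, hK, hKsub⟩ := mem_cocompact.mp (htends.eventually (eventually_gt_atTop s))
  obtain ⟨R₀, hR₀⟩ := hK.isBounded.subset_closedBall 0
  set R := max R₀ 0 with hRdef
  have hR : 0 ≤ R := le_max_right _ _
  have hWsub : {x : ℂ | R < ‖x‖} ⊆ A := by
    intro x hx
    have : x ∉ K := by
      intro hxK
      have := hR₀ hxK
      simp only [mem_closedBall, dist_zero_right] at this
      exact absurd (lt_of_le_of_lt (le_max_left R₀ 0) hx) (not_lt.mpr this)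
    exact hKsub this
  have hW : IsConnected {x : ℂ | R < ‖x‖} := exterior_ball_connected R hR
  -- compactness of the complement
  have hcompact : IsCompact {z : ℂ | ‖p.eval z‖ ≤ s} := by
    refine Metric.isCompact_of_isClosed_isBounded
      (isClosed_le hcont continuous_const) ?_
    refine (Metric.isBounded_closedBall (x := (0:ℂ)) (r := R)).subset ?_
    intro z hz
    simp only [mem_setOf_eq] at hz
    by_contra hzb
    simp only [mem_closedBall, dist_zero_right, not_le] at hzb
    exact absurd (hWsub hzb) (by simp only [hA, mem_setOf_eq, not_lt]; exact hz)
  -- every connected component of A is unbounded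
  have hcomp : ∀ z ∈ A, ¬ IsBounded (connectedComponentIn A z) := by
    intro z hz hbdd
    set C := connectedComponentIn A z with hC
    have hCopen : IsOpen C := hopen.connectedComponentIn
    have hfront : ∀ w ∈ frontier C, ‖p.eval w‖ ≤ s := by
      intro w hw
      by_contra hws
      push_neg at hws
      have hwA : w ∈ A := hws
      have hwnC : w ∉ C := fun h => hw.2 (by rwa [hCopen.interior_eq])
      -- the connected component of w in A is an open nbhd of w meeting C
      have hVopen : IsOpen (connectedComponentIn A w) := hopen.connectedComponentIn
      have hwV : w ∈ connectedComponentIn A w := mem_connectedComponentIn hwA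
      have hclos : w ∈ closure C := hw.1
      obtain ⟨x, hxV, hxC⟩ := mem_closure_iff.mp hclos _ hVopen hwV
      have h1 : connectedComponentIn A w = connectedComponentIn A x :=
        connectedComponentIn_eq hxV
      have h2 : connectedComponentIn A z = connectedComponentIn A x :=
        connectedComponentIn_eq hxC
      exact hwnC (by rw [hC, h2, ← h1]; exact hwV)
    have hmax : ‖p.eval z‖ ≤ s := by
      refine Complex.norm_le_of_forall_mem_frontier_norm_le hbdd
        (p.differentiable.diffContOnCl) hfront ?_
      exact subset_closure (mem_connectedComponentIn hz)
    exact absurd hmax (not_le.mpr hz)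
  -- components meet the connected exterior W
  have hmeet : ∀ z ∈ A, ∃ x ∈ connectedComponentIn A z, R < ‖x‖ := by
    intro z hz
    by_contra h
    push_neg at h
    exact hcomp z hz ((Metric.isBounded_closedBall (x := (0:ℂ)) (r := R)).subset
      (fun x hx => by simpa [mem_closedBall, dist_zero_right] using h x hx))
  -- A is nonempty
  have hne : A.Nonempty := by
    refine ⟨(R + 1 : ℝ), hWsub ?_⟩
    simp only [mem_setOf_eq, Complex.norm_real, Real.norm_eq_abs]
    rw [abs_of_nonneg (by linarith)]
    linarith
  obtain ⟨z₀, hz₀⟩ := hne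
  -- A equals the connected component of z₀
  have hAeq : A ⊆ connectedComponentIn A z₀ := by
    intro w hw
    obtain ⟨x₀, hx₀C, hx₀W⟩ := hmeet z₀ hz₀
    obtain ⟨x₁, hx₁C, hx₁W⟩ := hmeet w hw
    have hbig : IsPreconnected
        ((connectedComponentIn A z₀ ∪ {x : ℂ | R < ‖x‖}) ∪ connectedComponentIn A w) := by
      refine IsPreconnected.union x₁ (Or.inr hx₁W) hx₁C ?_
        isPreconnected_connectedComponentIn
      exact IsPreconnected.union x₀ hx₀C hx₀W isPreconnected_connectedComponentIn hW.2
    have hsub : ((connectedComponentIn A z₀ ∪ {x : ℂ | R < ‖x‖}) ∪ connectedComponentIn A w)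
        ⊆ A := by
      refine union_subset (union_subset (connectedComponentIn_subset _ _) hWsub)
        (connectedComponentIn_subset _ _)
    have := hbig.subset_connectedComponentIn
      (Or.inl (Or.inl (mem_connectedComponentIn hz₀))) hsub
    exact this (Or.inr (mem_connectedComponentIn hw))
  have hAcomp : A = connectedComponentIn A z₀ :=
    le_antisymm hAeq (connectedComponentIn_subset _ _)
  have hAconn : IsConnected A := ⟨⟨z₀, hz₀⟩, hAcomp ▸ isPreconnected_connectedComponentIn⟩
  have hAunbdd : ¬ IsBounded A := fun h => hcomp z₀ hz₀ (h.subset (connectedComponentIn_subset _ _))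
  exact ⟨hAconn, hAunbdd, hcompact, hcomp⟩
end
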